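/- arXiv:2511.05306 — 6 statements merged into one kernel-verified Lean document; each statement's English description precedes it below -/
import Mathlib

section
/- For φ = z₁z₂ and α ∈ 𝕋, the measure σ_α on 𝕋² defined by ∫ f dσ_α = ∫_𝕋 f(ζ, αζ̄) dm(ζ) satisfies the Clark measure identity: for all z = (z₁,z₂) ∈ 𝔻², (1 − |z₁z₂|²)/|α − z₁z₂|² = ∫_{𝕋²} P_{z₁}(ζ₁) P_{z₂}(ζ₂) dσ_α(ζ), where P_{z_j} denotes the one-variable Poisson kernel. -/
open Complex Metric MeasureTheory intervalIntegral

noncomputable section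

namespace Stmt3Aux

lemma norm_exp_I (θ : ℝ) : ‖Complex.exp (θ * Complex.I)‖ = 1 := by
  simpa using Complex.abs_exp_ofReal_mul_I θ

lemma one_sub_ne {c z : ℂ} (hc : ‖c‖ < 1) (hz : ‖z‖ ≤ 1) : 1 - c * z ≠ 0 := by
  intro h
  rw [sub_eq_zero] at h
  have : (1 : ℝ) ≤ ‖c * z‖ := by rw [← h]; simp
  rw [norm_mul] at this
  nlinarith [norm_nonneg c, norm_nonneg z]

lemma meanValue {f : ℂ → ℂ} (hf : DiffContOnCl ℂ f (ball 0 1)) :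
    ∫ θ in (0:ℝ)..(2*Real.pi), f (Complex.exp (θ * Complex.I)) = 2 * Real.pi * f 0 := by
  have h := hf.circleIntegral_sub_inv_smul (c := 0) (R := 1) (w := 0) (by simp)
  rw [circleIntegral] at h
  simp only [deriv_circleMap, circleMap_zero, sub_zero, smul_eq_mul, ofReal_one, one_mul] at h
  have hcongr : ∀ θ ∈ Set.uIcc (0:ℝ) (2*Real.pi),
      Complex.exp (θ*Complex.I) * Complex.I *
        ((Complex.exp (θ*Complex.I))⁻¹ * f (Complex.exp (θ*Complex.I)))
        = Complex.I * f (Complex.exp (θ*Complex.I)) := by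
    intro θ _
    field_simp [Complex.exp_ne_zero]
  rw [intervalIntegral.integral_congr hcongr, intervalIntegral.integral_const_mul] at h
  apply mul_left_cancel₀ Complex.I_ne_zero
  rw [h]; ring


lemma mk_dcoc {f : ℂ → ℂ} (h : DifferentiableOn ℂ f (closedBall (0:ℂ) 1)) :
    DiffContOnCl ℂ f (ball (0:ℂ) 1) := by
  apply DifferentiableOn.diffContOnCl
  rwa [closure_ball (0:ℂ) one_ne_zero]

lemma dOn_v {c : ℂ} (hc : ‖c‖ < 1) :
    DifferentiableOn ℂ (fun z => (1 - c * z)⁻¹) (closedBall (0:ℂ) 1) := by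
  apply DifferentiableOn.inv
  · exact (differentiableOn_const _).sub ((differentiableOn_const c).mul differentiableOn_id)
  · intro z hz
    exact one_sub_ne hc (by simpa [Complex.dist_eq] using hz)

lemma dcoc_v {c : ℂ} (hc : ‖c‖ < 1) :
    DiffContOnCl ℂ (fun z => (1 - c * z)⁻¹) (ball 0 1) := mk_dcoc (dOn_v hc)

lemma dcoc_vv {c d : ℂ} (hc : ‖c‖ < 1) (hd : ‖d‖ < 1) :
    DiffContOnCl ℂ (fun z => (1 - c * z)⁻¹ * (1 - d * z)⁻¹) (ball 0 1) :=
  mk_dcoc ((dOn_v hc).mul (dOn_v hd))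

lemma dcoc_zv {c : ℂ} (hc : ‖c‖ < 1) :
    DiffContOnCl ℂ (fun z => z * (1 - c * z)⁻¹) (ball 0 1) :=
  mk_dcoc (differentiableOn_id.mul (dOn_v hc))

lemma cont_v {c : ℂ} (hc : ‖c‖ < 1) :
    Continuous (fun θ : ℝ => (1 - c * Complex.exp (θ * Complex.I))⁻¹) := by
  apply Continuous.inv₀
  · fun_prop
  · intro θ; exact one_sub_ne hc (norm_exp_I θ).le

lemma cont_w {d : ℂ} (hd : ‖d‖ < 1) :
    Continuous (fun θ : ℝ => (Complex.exp (θ * Complex.I) - d)⁻¹) := by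
  apply Continuous.inv₀
  · fun_prop
  · intro θ
    intro h
    rw [sub_eq_zero] at h
    rw [← h, norm_exp_I] at hd
    exact lt_irrefl _ hd

lemma int_v {c : ℂ} (hc : ‖c‖ < 1) :
    ∫ θ in (0:ℝ)..(2*Real.pi), (1 - c * Complex.exp (θ * Complex.I))⁻¹ = 2*Real.pi := by
  have := meanValue (dcoc_v hc)
  simpa using this

lemma int_vv {c d : ℂ} (hc : ‖c‖ < 1) (hd : ‖d‖ < 1) :
    ∫ θ in (0:ℝ)..(2*Real.pi),
      (1 - c * Complex.exp (θ * Complex.I))⁻¹ * (1 - d * Complex.exp (θ * Complex.I))⁻¹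
      = 2*Real.pi := by
  have := meanValue (dcoc_vv hc hd)
  simpa using this

lemma intervalIntegral_conj {f : ℝ → ℂ} {a b : ℝ} :
    ∫ x in a..b, (starRingEnd ℂ) (f x) = (starRingEnd ℂ) (∫ x in a..b, f x) := by
  simp only [intervalIntegral, integral_conj, map_sub]

lemma conj_exp_eq (θ : ℝ) :
    (starRingEnd ℂ) (Complex.exp (θ * Complex.I)) = (Complex.exp (θ * Complex.I))⁻¹ := by
  rw [← Complex.exp_conj]
  rw [← Complex.exp_neg]
  congr 1
  simp [Complex.conj_I]

lemma int_w {d : ℂ} (hd : ‖d‖ < 1) :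
    ∫ θ in (0:ℝ)..(2*Real.pi), (Complex.exp (θ * Complex.I) - d)⁻¹ = 0 := by
  have hmv := meanValue (dcoc_zv (c := (starRingEnd ℂ) d) (by simpa using hd))
  have hpt : ∀ θ : ℝ, (Complex.exp (θ * Complex.I) - d)⁻¹
      = (starRingEnd ℂ) (Complex.exp (θ * Complex.I) *
          (1 - (starRingEnd ℂ) d * Complex.exp (θ * Complex.I))⁻¹) := by
    intro θ
    set e := Complex.exp (θ * Complex.I) with he
    have he0 : e ≠ 0 := Complex.exp_ne_zero _
    have h1 : (1 : ℂ) - (starRingEnd ℂ) d * e ≠ 0 :=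
      one_sub_ne (by simpa using hd) (norm_exp_I θ).le
    rw [map_mul, map_inv₀, map_sub, map_mul, map_one, Complex.conj_conj, conj_exp_eq]
    have h2 : e - d ≠ 0 := by
      intro h; rw [sub_eq_zero] at h; rw [← h, norm_exp_I] at hd; exact lt_irrefl _ hd
    field_simp
    rw [← he, div_self h2]
  rw [intervalIntegral.integral_congr (fun θ _ => hpt θ), intervalIntegral_conj, hmv]
  simp

lemma key {c ζ : ℂ} (hc : ‖c‖ < 1) (hζ : ‖ζ‖ = 1) :
    (((1 - ‖c‖ ^ 2) / ‖1 - c * ζ‖ ^ 2 : ℝ) : ℂ)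
      = (1 - c * ζ)⁻¹ + (starRingEnd ℂ) ((1 - c * ζ)⁻¹) - 1 := by
  set q := 1 - c * ζ with hqdef
  have hq : q ≠ 0 := one_sub_ne hc hζ.le
  have hq' : (starRingEnd ℂ) q ≠ 0 := by simpa using hq
  have hζ1 : ζ * (starRingEnd ℂ) ζ = 1 := by
    rw [RCLike.mul_conj, hζ]; norm_num
  have hc1 : c * (starRingEnd ℂ) c = ((‖c‖ : ℝ) : ℂ) ^ 2 := by
    rw [RCLike.mul_conj]; push_cast; rfl
  have hnq : ((‖q‖ : ℝ) : ℂ) ^ 2 = q * (starRingEnd ℂ) q := by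
    rw [RCLike.mul_conj]; push_cast; rfl
  have main : 1 - ((‖c‖ : ℝ) : ℂ) ^ 2 = q + (starRingEnd ℂ) q - q * (starRingEnd ℂ) q := by
    rw [hqdef]
    simp only [map_sub, map_mul, map_one]
    linear_combination (c * (starRingEnd ℂ) c) * hζ1 + hc1
  rw [map_inv₀]
  push_cast
  rw [main, hnq]
  field_simp
  ring

lemma pf {c d ζ : ℂ} (h1 : 1 - c * ζ ≠ 0) (h2 : ζ - d ≠ 0) (h3 : 1 - c * d ≠ 0) :
    (1 - c * ζ)⁻¹ * (ζ * (ζ - d)⁻¹)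
      = (1 - c * d)⁻¹ * (1 - c * ζ)⁻¹ + d * (1 - c * d)⁻¹ * (ζ - d)⁻¹ := by
  field_simp
  ring

end Stmt3Aux

open Stmt3Aux

/-- The one-variable Poisson kernel `P_z(ζ) = (1 − |z|²)/|ζ − z|²`. -/
def poissonKer (z ζ : ℂ) : ℝ := (1 - ‖z‖ ^ 2) / ‖ζ - z‖ ^ 2

/-- for `φ = z₁z₂` and `α ∈ 𝕋`, the measure `σ_α`, defined as the
pushforward of normalized Lebesgue measure `m` on `𝕋` under `ζ ↦ (ζ, αζ̄)`,
satisfies the Clark measure identity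
`(1 − |z₁z₂|²)/|α − z₁z₂|² = ∫_{𝕋²} P_{z₁}(ζ₁)P_{z₂}(ζ₂) dσ_α(ζ)`
for all `(z₁, z₂) ∈ 𝔻²`. -/
theorem stmt3 (α z₁ z₂ : ℂ) (hα : ‖α‖ = 1) (hz₁ : ‖z₁‖ < 1) (hz₂ : ‖z₂‖ < 1) :
    (1 - ‖z₁ * z₂‖ ^ 2) / ‖α - z₁ * z₂‖ ^ 2 =
      (2 * Real.pi)⁻¹ * ∫ θ in (0:ℝ)..(2 * Real.pi),
        poissonKer z₁ (Complex.exp (θ * Complex.I)) *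
          poissonKer z₂ (α * (starRingEnd ℂ) (Complex.exp (θ * Complex.I))) := by
  have hπ : (2 * Real.pi : ℝ) ≠ 0 := by positivity
  set c₁ : ℂ := (starRingEnd ℂ) z₁ with hc₁def
  set c₂ : ℂ := (starRingEnd ℂ) α * z₂ with hc₂def
  set d : ℂ := α * (starRingEnd ℂ) z₂ with hddef
  have hc₁ : ‖c₁‖ < 1 := by rwa [hc₁def, RCLike.norm_conj]
  have hc₂ : ‖c₂‖ < 1 := by rw [hc₂def, norm_mul, RCLike.norm_conj, hα, one_mul]; exact hz₂
  have hd : ‖d‖ < 1 := by rw [hddef, norm_mul, RCLike.norm_conj, hα, one_mul]; exact hz₂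
  have hdconj : (starRingEnd ℂ) c₂ = d := by rw [hc₂def, hddef, map_mul, Complex.conj_conj]
  set u : ℂ := c₁ * d with hudef
  have hu : ‖u‖ < 1 := by
    rw [hudef, norm_mul]
    nlinarith [norm_nonneg c₁, norm_nonneg d]
  have h3 : (1 : ℂ) - c₁ * d ≠ 0 := one_sub_ne hc₁ hd.le
  -- the functions
  set A : ℝ → ℂ := fun θ => (1 - c₁ * Complex.exp (θ * Complex.I))⁻¹ with hA
  set B : ℝ → ℂ := fun θ => (1 - c₂ * Complex.exp (θ * Complex.I))⁻¹ with hB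
  set W : ℝ → ℂ := fun θ => (Complex.exp (θ * Complex.I) - d)⁻¹ with hW
  set X : ℝ → ℂ := fun θ => (1 - c₁*d)⁻¹ * A θ + d * (1 - c₁*d)⁻¹ * W θ with hX
  -- pointwise identity
  have hpt : ∀ θ : ℝ,
      ((poissonKer z₁ (Complex.exp (θ * Complex.I)) *
        poissonKer z₂ (α * (starRingEnd ℂ) (Complex.exp (θ * Complex.I))) : ℝ) : ℂ)
      = (A θ * B θ + (starRingEnd ℂ) (A θ * B θ))
        + (X θ + (starRingEnd ℂ) (X θ))
        - (A θ + (starRingEnd ℂ) (A θ)) - (B θ + (starRingEnd ℂ) (B θ)) + 1 := by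
    intro θ
    set e : ℂ := Complex.exp (θ * Complex.I) with he
    have hne : ‖e‖ = 1 := norm_exp_I θ
    have he0 : e ≠ 0 := Complex.exp_ne_zero _
    have hee : e * (starRingEnd ℂ) e = 1 := by
      rw [RCLike.mul_conj, hne]; norm_num
    have hed : e - d ≠ 0 := by
      intro h; rw [sub_eq_zero] at h; rw [← h, hne] at hd; exact lt_irrefl _ hd
    have hn1 : ‖e - z₁‖ = ‖1 - c₁ * e‖ := by
      have key1 : (1 : ℂ) - c₁ * e = e * (starRingEnd ℂ) (e - z₁) := by
        rw [map_sub, hc₁def]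
        linear_combination -hee
      rw [key1, norm_mul, hne, one_mul, RCLike.norm_conj]
    have hn2 : ‖α * (starRingEnd ℂ) e - z₂‖ = ‖1 - c₂ * e‖ := by
      have key2 : (1 : ℂ) - c₂ * e = (α * (starRingEnd ℂ) e - z₂) * ((starRingEnd ℂ) α * e) := by
        have haa : α * (starRingEnd ℂ) α = 1 := by rw [RCLike.mul_conj, hα]; norm_num
        rw [hc₂def]
        linear_combination (-(α * (starRingEnd ℂ) α)) * hee - haa
      rw [key2, norm_mul, norm_mul, RCLike.norm_conj, hα, one_mul, hne, mul_one]
    have e1 : poissonKer z₁ e = (1 - ‖c₁‖ ^ 2) / ‖1 - c₁ * e‖ ^ 2 := by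
      rw [poissonKer, hn1, hc₁def, RCLike.norm_conj]
    have e2 : poissonKer z₂ (α * (starRingEnd ℂ) e) = (1 - ‖c₂‖ ^ 2) / ‖1 - c₂ * e‖ ^ 2 := by
      rw [poissonKer, hn2, hc₂def, norm_mul, RCLike.norm_conj, hα, one_mul]
    have hBconj : (starRingEnd ℂ) (B θ) = e * W θ := by
      rw [hB, hW]
      simp only [map_inv₀, map_sub, map_mul, map_one, hdconj, ← he]
      rw [conj_exp_eq θ, ← he]
      have hstep : (1:ℂ) - d * e⁻¹ = (e - d) * e⁻¹ := by field_simp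
      rw [hstep, mul_inv_rev, inv_inv]
    have hprod : A θ * (starRingEnd ℂ) (B θ) = X θ := by
      rw [hBconj]
      have h1 : (1 : ℂ) - c₁ * e ≠ 0 := one_sub_ne hc₁ hne.le
      show (1 - c₁ * e)⁻¹ * (e * (e - d)⁻¹)
        = (1 - c₁ * d)⁻¹ * (1 - c₁ * e)⁻¹ + d * (1 - c₁ * d)⁻¹ * (e - d)⁻¹
      exact pf h1 hed h3
    have hAB : ((poissonKer z₁ e : ℝ) : ℂ) = A θ + (starRingEnd ℂ) (A θ) - 1 := by
      rw [e1]
      have := key (c := c₁) (ζ := e) hc₁ hne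
      rw [this, hA]
    have hBB : ((poissonKer z₂ (α * (starRingEnd ℂ) e) : ℝ) : ℂ)
        = B θ + (starRingEnd ℂ) (B θ) - 1 := by
      rw [e2]
      have := key (c := c₂) (ζ := e) hc₂ hne
      rw [this, hB]
    push_cast
    rw [hAB, hBB, ← hprod]
    simp only [map_mul, Complex.conj_conj]
    ring
  -- continuity/integrability
  have contA : Continuous A := cont_v hc₁
  have contB : Continuous B := cont_v hc₂
  have contW : Continuous W := cont_w hd
  have contX : Continuous X := by
    rw [hX]; fun_prop
  have contAB : Continuous (fun θ => A θ * B θ) := contA.mul contB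
  have iAB : IntervalIntegrable (fun θ => A θ * B θ) volume 0 (2*Real.pi) :=
    contAB.intervalIntegrable _ _
  have iABc : IntervalIntegrable (fun θ => (starRingEnd ℂ) (A θ * B θ)) volume 0 (2*Real.pi) :=
    (Complex.continuous_conj.comp contAB).intervalIntegrable _ _
  have iX : IntervalIntegrable X volume 0 (2*Real.pi) := contX.intervalIntegrable _ _
  have iXc : IntervalIntegrable (fun θ => (starRingEnd ℂ) (X θ)) volume 0 (2*Real.pi) :=
    (Complex.continuous_conj.comp contX).intervalIntegrable _ _
  have iA : IntervalIntegrable A volume 0 (2*Real.pi) := contA.intervalIntegrable _ _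
  have iAc : IntervalIntegrable (fun θ => (starRingEnd ℂ) (A θ)) volume 0 (2*Real.pi) :=
    (Complex.continuous_conj.comp contA).intervalIntegrable _ _
  have iB : IntervalIntegrable B volume 0 (2*Real.pi) := contB.intervalIntegrable _ _
  have iBc : IntervalIntegrable (fun θ => (starRingEnd ℂ) (B θ)) volume 0 (2*Real.pi) :=
    (Complex.continuous_conj.comp contB).intervalIntegrable _ _
  -- values of the elementary integrals
  have vA : ∫ θ in (0:ℝ)..(2*Real.pi), A θ = 2*Real.pi := int_v hc₁
  have vB : ∫ θ in (0:ℝ)..(2*Real.pi), B θ = 2*Real.pi := int_v hc₂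
  have vW : ∫ θ in (0:ℝ)..(2*Real.pi), W θ = 0 := int_w hd
  have vAB : ∫ θ in (0:ℝ)..(2*Real.pi), A θ * B θ = 2*Real.pi := int_vv hc₁ hc₂
  have vX : ∫ θ in (0:ℝ)..(2*Real.pi), X θ = (1 - c₁*d)⁻¹ * (2*Real.pi) := by
    rw [hX]
    rw [intervalIntegral.integral_add
      ((contA.intervalIntegrable _ _).const_mul _)
      ((contW.intervalIntegrable _ _).const_mul _)]
    rw [intervalIntegral.integral_const_mul, intervalIntegral.integral_const_mul, vA, vW]
    push_cast
    ring
  -- compute the big integral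
  have bigint : (∫ θ in (0:ℝ)..(2*Real.pi),
      ((A θ * B θ + (starRingEnd ℂ) (A θ * B θ))
        + (X θ + (starRingEnd ℂ) (X θ))
        - (A θ + (starRingEnd ℂ) (A θ)) - (B θ + (starRingEnd ℂ) (B θ)) + 1))
      = 2*Real.pi * ((1 - u)⁻¹ + (1 - (starRingEnd ℂ) u)⁻¹ - 1) := by
    rw [intervalIntegral.integral_add (((((iAB.add iABc).add (iX.add iXc)).sub (iA.add iAc)).sub
      (iB.add iBc))) intervalIntegrable_const]
    rw [intervalIntegral.integral_sub (((iAB.add iABc).add (iX.add iXc)).sub (iA.add iAc))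
      (iB.add iBc)]
    rw [intervalIntegral.integral_sub ((iAB.add iABc).add (iX.add iXc)) (iA.add iAc)]
    rw [intervalIntegral.integral_add (iAB.add iABc) (iX.add iXc)]
    rw [intervalIntegral.integral_add iAB iABc, intervalIntegral.integral_add iX iXc]
    rw [intervalIntegral.integral_add iA iAc, intervalIntegral.integral_add iB iBc]
    rw [intervalIntegral_conj, intervalIntegral_conj, intervalIntegral_conj,
      intervalIntegral_conj]
    rw [vA, vB, vAB, vX, intervalIntegral.integral_const]
    simp only [map_mul, map_inv₀, map_sub, map_one, Complex.conj_ofReal, hudef, map_ofNat,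
      sub_zero, Complex.real_smul]
    push_cast
    ring
  -- put everything together
  apply Complex.ofReal_injective
  push_cast
  rw [← intervalIntegral.integral_ofReal]
  rw [intervalIntegral.integral_congr (fun θ _ => hpt θ)]
  rw [bigint]
  -- now prove the left-hand side equality
  have hnu : ‖u‖ = ‖z₁ * z₂‖ := by
    simp [hudef, hc₁def, hddef, hα]
  have h1u : ‖α - z₁ * z₂‖ = ‖1 - u‖ := by
    have haa : α * (starRingEnd ℂ) α = 1 := by rw [RCLike.mul_conj, hα]; norm_num
    have : α - z₁ * z₂ = α * (starRingEnd ℂ) (1 - u) := by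
      rw [hudef, hc₁def, hddef]
      simp only [map_sub, map_mul, map_one, Complex.conj_conj]
      linear_combination z₁ * z₂ * haa
    rw [this, norm_mul, hα, one_mul, RCLike.norm_conj]
  have lhs_key := key (c := u) (ζ := 1) hu (by norm_num)
  rw [mul_one] at lhs_key
  rw [hnu, ← h1u] at lhs_key
  push_cast at lhs_key
  have hconj : (1 - (starRingEnd ℂ) u)⁻¹ = (starRingEnd ℂ) ((1 - u)⁻¹) := by
    rw [map_inv₀, map_sub, map_one]
  have h2π : ((2:ℂ) * Real.pi) ≠ 0 := by
    simp [Real.pi_ne_zero]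
  rw [inv_mul_cancel_left₀ h2π, hconj]
  exact lhs_key
end
end

section
/- With notation as above, on L²(σ_α) one has the intertwining J_α* M_{z̄₁} = V¹_α J_α*, where V¹_α is defined on the range of J_α* by (V¹_α f)(z) = (B₁f)(z) + ψ¹_α(z) f(0,z₂), with ψ¹_α(z) = ᾱ (B₁φ)(z)/(1 − ᾱ φ(0,z₂)). -/
open MeasureTheory ComplexConjugate

noncomputable section

/-- The open unit bidisk `𝔻² ⊂ ℂ²`. -/
def biDisk : Set (ℂ × ℂ) := {z | ‖z.1‖ < 1 ∧ ‖z.2‖ < 1}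

/-- The Szegő kernel of the bidisk: `k_w(z) = 1/((1−z₁w̄₁)(1−z₂w̄₂))`. -/
def szego (w z : ℂ × ℂ) : ℂ := ((1 - z.1 * conj w.1) * (1 - z.2 * conj w.2))⁻¹

/-- The backward shift in the first variable, with the removable singularity
at `z₁ = 0` filled in holomorphically. -/
def B1 (f : ℂ × ℂ → ℂ) : ℂ × ℂ → ℂ := fun z =>
  if z.1 = 0 then deriv (fun w : ℂ => f (w, z.2)) 0
  else (f z - f (0, z.2)) / z.1

/-- The symbol `ψ¹_α(z) = ᾱ(B₁φ)(z)/(1 − ᾱφ(0,z₂))`. -/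
def psi1 (φ : ℂ × ℂ → ℂ) (α : ℂ) (z : ℂ × ℂ) : ℂ :=
  conj α * B1 φ z / (1 - conj α * φ (0, z.2))

/-- The conjugated Szegő kernel `ζ ↦ conj (szego w ζ)` as an explicit function. -/
def csz (w ζ : ℂ × ℂ) : ℂ := ((1 - conj ζ.1 * w.1) * (1 - conj ζ.2 * w.2))⁻¹

lemma one_sub_ne {a b : ℂ} (ha : ‖a‖ = 1) (hb : ‖b‖ < 1) : 1 - a * b ≠ 0 := by
  intro h
  have h1 : a * b = 1 := by linear_combination -h
  have : ‖a * b‖ = 1 := by rw [h1, norm_one]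
  rw [norm_mul, ha, one_mul] at this
  linarith

lemma inv_norm_le {a b : ℂ} (ha : ‖a‖ = 1) (hb : ‖b‖ < 1) :
    ‖(1 - a * b)⁻¹‖ ≤ (1 - ‖b‖)⁻¹ := by
  rw [norm_inv]
  have h2 : 1 - ‖b‖ ≤ ‖1 - a * b‖ := by
    calc 1 - ‖b‖ = ‖(1:ℂ)‖ - ‖a * b‖ := by rw [norm_one, norm_mul, ha, one_mul]
    _ ≤ ‖1 - a * b‖ := norm_sub_norm_le _ _
  exact inv_anti₀ (by linarith) h2

lemma conj_szego (w ζ : ℂ × ℂ) : conj (szego w ζ) = csz w ζ := by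
  simp only [szego, csz, map_inv₀, map_mul, map_sub, map_one, Complex.conj_conj]

lemma csz_meas (w : ℂ × ℂ) : Measurable (csz w) := by
  apply Measurable.inv
  exact (measurable_const.sub ((Complex.continuous_conj.measurable.comp measurable_fst).mul
      measurable_const)).mul
    (measurable_const.sub ((Complex.continuous_conj.measurable.comp measurable_snd).mul
      measurable_const))

lemma csz_bound {w ζ : ℂ × ℂ} (hw : w ∈ biDisk) (h1 : ‖ζ.1‖ = 1) (h2 : ‖ζ.2‖ = 1) :
    ‖csz w ζ‖ ≤ (1 - ‖w.1‖)⁻¹ * (1 - ‖w.2‖)⁻¹ := by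
  have hc1 : ‖conj ζ.1‖ = 1 := by rwa [RCLike.norm_conj]
  have hc2 : ‖conj ζ.2‖ = 1 := by rwa [RCLike.norm_conj]
  rw [csz, mul_inv, norm_mul]
  have b1 := inv_norm_le hc1 hw.1
  have b2 := inv_norm_le hc2 hw.2
  have p2 : (0:ℝ) < 1 - ‖w.2‖ := by have := hw.2; linarith
  exact mul_le_mul b1 b2 (norm_nonneg _) (inv_nonneg.mpr (by have := hw.1; linarith))

set_option maxHeartbeats 1000000 in
/-- with `φ` inner on `𝔻²`, `σ_α` its Clark measure, and
`J_α : K_φ → L²(σ_α)` the Clark embedding, the adjoint intertwines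
multiplication by `ζ̄₁` with the operator `V¹_α`:
`(J_α^* M_{z̄₁} g)(z) = (B₁ (J_α^* g))(z) + ψ¹_α(z)(J_α^* g)(0, z₂)`,
where `(J_α^* g)(z) = ⟪k^φ_z, J_α^* g⟫`. -/
theorem stmt6
    {Kphi : Type*} [NormedAddCommGroup Kphi] [InnerProductSpace ℂ Kphi]
    [CompleteSpace Kphi]
    (μ : Measure (ℂ × ℂ)) [IsFiniteMeasure μ]
    (hμtorus : ∀ᵐ ζ ∂μ, ‖ζ.1‖ = 1 ∧ ‖ζ.2‖ = 1)
    (φ : ℂ × ℂ → ℂ) (hφ : DifferentiableOn ℂ φ biDisk)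
    (hφbdd : ∀ z ∈ biDisk, ‖φ z‖ ≤ 1)
    (α : ℂ) (hα : ‖α‖ = 1)
    (kern : ℂ × ℂ → Kphi)
    (hspan : (Submodule.span ℂ (kern '' biDisk)).topologicalClosure = ⊤)
    (hkernRep : ∀ (w v : ℂ × ℂ), w ∈ biDisk → v ∈ biDisk →
      @inner ℂ _ _ (kern w) (kern v) = (1 - φ v * conj (φ w)) * szego w v)
    (J : Kphi →L[ℂ] Lp ℂ 2 μ)
    (hJiso : ∀ x : Kphi, ‖J x‖ = ‖x‖)
    (hJ : ∀ w ∈ biDisk,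
      (J (kern w) : ℂ × ℂ → ℂ) =ᵐ[μ]
        fun ζ => (1 - α * conj (φ w)) * szego w ζ) :
    ∀ (g g' : Lp ℂ 2 μ),
      ((g' : ℂ × ℂ → ℂ) =ᵐ[μ] fun ζ => conj ζ.1 * (g : ℂ × ℂ → ℂ) ζ) →
      ∀ z ∈ biDisk,
        @inner ℂ _ _ (kern z) ((ContinuousLinearMap.adjoint J) g') =
          B1 (fun y => @inner ℂ _ _ (kern y)
                ((ContinuousLinearMap.adjoint J) g)) z +
            psi1 φ α z *
              @inner ℂ _ _ (kern (0, z.2))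
                ((ContinuousLinearMap.adjoint J) g) := by
  intro g g' hg' z hz
  obtain ⟨z1, z2⟩ := z
  obtain ⟨hz1, hz2⟩ := hz
  simp only at hz1 hz2
  -- the representation of the adjoint via integrals
  have rep : ∀ w ∈ biDisk, ∀ u : Lp ℂ 2 μ,
      (inner ℂ (kern w) ((ContinuousLinearMap.adjoint J) u) : ℂ) =
        (1 - conj α * φ w) * ∫ ζ, csz w ζ * (u : ℂ × ℂ → ℂ) ζ ∂μ := by
    intro w hw u
    rw [ContinuousLinearMap.adjoint_inner_right, L2.inner_def, ← integral_const_mul]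
    refine integral_congr_ae ?_
    filter_upwards [hJ w hw] with ζ hζ
    rw [RCLike.inner_apply, hζ, map_mul, conj_szego]
    simp only [map_sub, map_one, map_mul, Complex.conj_conj]
    ring
  set G : ℂ × ℂ → ℂ := (g : ℂ × ℂ → ℂ) with hG
  -- integrability facts
  have hGint : Integrable G μ := (Lp.memLp g).integrable one_le_two
  have hG1int : Integrable (fun ζ : ℂ × ℂ => conj ζ.1 * G ζ) μ := by
    refine hGint.bdd_mul (c := 1)
      ((Complex.continuous_conj.measurable.comp measurable_fst).aestronglyMeasurable) ?_
    filter_upwards [hμtorus] with ζ hζ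
    rw [RCLike.norm_conj, hζ.1]
  have hint : ∀ w ∈ biDisk, ∀ H : ℂ × ℂ → ℂ, Integrable H μ →
      Integrable (fun ζ => csz w ζ * H ζ) μ := by
    intro w hw H hH
    refine hH.bdd_mul (c := (1 - ‖w.1‖)⁻¹ * (1 - ‖w.2‖)⁻¹)
      (csz_meas w).aestronglyMeasurable ?_
    filter_upwards [hμtorus] with ζ hζ
    exact csz_bound hw hζ.1 hζ.2
  have h0mem : ((0 : ℂ), z2) ∈ biDisk := ⟨by simpa using one_pos, hz2⟩
  have hzmem : ((z1 : ℂ), z2) ∈ biDisk := ⟨hz1, hz2⟩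
  set F : ℂ × ℂ → ℂ := fun w => ∫ ζ, csz w ζ * G ζ ∂μ with hF
  set c : ℂ := ∫ ζ, csz (0, z2) ζ * (conj ζ.1 * G ζ) ∂μ with hc
  -- the function f = J^* g as reproduced by the kernel
  set f : ℂ × ℂ → ℂ :=
    fun y => (inner ℂ (kern y) ((ContinuousLinearMap.adjoint J) g) : ℂ) with hf
  have hfval : ∀ w ∈ biDisk, f w = (1 - conj α * φ w) * F w := fun w hw => rep w hw g
  -- the left side
  have hLHS : ∀ w ∈ biDisk,
      (inner ℂ (kern w) ((ContinuousLinearMap.adjoint J) g') : ℂ) =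
        (1 - conj α * φ w) * ∫ ζ, csz w ζ * (conj ζ.1 * G ζ) ∂μ := by
    intro w hw
    rw [rep w hw g']
    congr 1
    refine integral_congr_ae ?_
    filter_upwards [hg'] with ζ hζ
    rw [hζ]
  by_cases hd : 1 - conj α * φ (0, z2) = 0
  · -- degenerate case: |φ(0,z₂)| = 1, so φ is constant on the slice and kern vanishes there
    have hφ0 : ‖φ (0, z2)‖ = 1 := by
      have h1 : conj α * φ (0, z2) = 1 := by linear_combination -hd
      have h2 := congrArg norm h1
      rwa [norm_mul, RCLike.norm_conj, hα, one_mul, norm_one] at h2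
    have hmap : ∀ w ∈ Metric.ball (0:ℂ) 1, ((w : ℂ), z2) ∈ biDisk := fun w hw =>
      ⟨by simpa using mem_ball_zero_iff.mp hw, hz2⟩
    have hslice : ∀ w : ℂ, ‖w‖ < 1 → φ (w, z2) = φ (0, z2) := by
      have hdiff : DifferentiableOn ℂ (fun w : ℂ => φ (w, z2)) (Metric.ball 0 1) :=
        hφ.comp ((differentiable_id.prodMk (differentiable_const z2)).differentiableOn) hmap
      have hmax : IsMaxOn (norm ∘ fun w : ℂ => φ (w, z2)) (Metric.ball 0 1) 0 := by
        intro w hw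
        simp only [Function.comp_apply, Set.mem_setOf_eq]
        calc ‖φ (w, z2)‖ ≤ 1 := hφbdd _ (hmap w hw)
          _ = ‖φ (0, z2)‖ := hφ0.symm
      have heq := Complex.eqOn_of_isPreconnected_of_isMaxOn_norm
        (convex_ball (0:ℂ) 1).isPreconnected Metric.isOpen_ball hdiff
        (Metric.mem_ball_self one_pos) hmax
      intro w hw
      simpa using heq (mem_ball_zero_iff.mpr hw)
    have hone : φ (0, z2) * conj (φ (0, z2)) = 1 := by
      rw [Complex.mul_conj, Complex.normSq_eq_norm_sq, hφ0]
      norm_num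
    have hk0 : ∀ w : ℂ, ‖w‖ < 1 → kern ((w : ℂ), z2) = 0 := by
      intro w hw
      have hm : ((w : ℂ), z2) ∈ biDisk := ⟨hw, hz2⟩
      have h2 := hkernRep (w, z2) (w, z2) hm hm
      rw [hslice w hw, hone] at h2
      have h3 : (inner ℂ (kern ((w:ℂ), z2)) (kern ((w:ℂ), z2)) : ℂ) = 0 := by
        rw [h2]; ring
      exact inner_self_eq_zero.mp h3
    have hf0 : ∀ w : ℂ, ‖w‖ < 1 → f ((w : ℂ), z2) = 0 := by
      intro w hw
      rw [hf]
      simp only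
      rw [hk0 w hw, inner_zero_left]
    have h10 : ‖(0:ℂ)‖ < 1 := by simpa using one_pos
    have hB : B1 f (z1, z2) = 0 := by
      by_cases h0 : z1 = 0
      · have hev : (fun w : ℂ => f (w, z2)) =ᶠ[nhds 0] fun _ => (0:ℂ) := by
          filter_upwards [Metric.ball_mem_nhds (0:ℂ) one_pos] with w hw
          exact hf0 w (mem_ball_zero_iff.mp hw)
        simp only [B1, h0, if_pos]
        rw [hev.deriv_eq, deriv_const]
      · simp only [B1, if_neg h0]
        rw [hf0 z1 hz1, hf0 0 h10]
        simp
    show _ = B1 f (z1, z2) + psi1 φ α (z1, z2) *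
        (inner ℂ (kern (0, z2)) ((ContinuousLinearMap.adjoint J) g) : ℂ)
    rw [hk0 z1 hz1, hk0 0 h10, hB, inner_zero_left, inner_zero_left]
    ring
  · by_cases hz10 : z1 = 0
    · -- derivative case: z1 = 0
      subst hz10
      have hbopen : IsOpen biDisk := by
        have hbd : biDisk = {z : ℂ × ℂ | ‖z.1‖ < 1} ∩ {z | ‖z.2‖ < 1} := rfl
        rw [hbd]
        exact (isOpen_lt continuous_fst.norm continuous_const).inter
          (isOpen_lt continuous_snd.norm continuous_const)
      have hφd : DifferentiableAt ℂ (fun w : ℂ => φ (w, z2)) 0 := by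
        have h1 : DifferentiableAt ℂ φ ((0:ℂ), z2) :=
          (hφ ((0:ℂ), z2) h0mem).differentiableAt (hbopen.mem_nhds h0mem)
        exact h1.comp 0 (differentiableAt_id.prodMk (differentiableAt_const z2))
      set d1 : ℂ := deriv (fun w : ℂ => φ (w, z2)) 0 with hd1
      have hφd' : HasDerivAt (fun w : ℂ => φ (w, z2)) d1 0 := hφd.hasDerivAt
      -- derivative of the slice of F at 0 is c
      have hFd : HasDerivAt (fun w : ℂ => F (w, z2)) c 0 := by
        rw [hasDerivAt_iff_isLittleO]
        have hO : (fun w : ℂ => F (w, z2) - F ((0:ℂ), z2) - (w - 0) • c) =O[nhds 0]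
            (fun w => w ^ 2) := by
          rw [Asymptotics.isBigO_iff]
          refine ⟨(2 * (1 - ‖z2‖)⁻¹) * ∫ ζ, ‖G ζ‖ ∂μ, ?_⟩
          have hball : ∀ᶠ w : ℂ in nhds 0, ‖w‖ < 1/2 := by
            filter_upwards [Metric.ball_mem_nhds (0:ℂ) (by norm_num : (0:ℝ) < 1/2)] with w hw
            exact mem_ball_zero_iff.mp hw
          filter_upwards [hball] with w hw
          have hwmem : ((w : ℂ), z2) ∈ biDisk := ⟨by simp only; linarith, hz2⟩
          have iX : Integrable (fun ζ : ℂ × ℂ => csz (w, z2) ζ * G ζ) μ :=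
            hint _ hwmem G hGint
          have iY : Integrable (fun ζ : ℂ × ℂ => csz (0, z2) ζ * G ζ) μ :=
            hint _ h0mem G hGint
          have iZ : Integrable
              (fun ζ : ℂ × ℂ => w * (csz (0, z2) ζ * (conj ζ.1 * G ζ))) μ :=
            (hint _ h0mem _ hG1int).const_mul w
          have iXY : Integrable
              (fun ζ : ℂ × ℂ => csz (w, z2) ζ * G ζ - csz (0, z2) ζ * G ζ) μ := iX.sub iY
          have heq : F (w, z2) - F ((0:ℂ), z2) - (w - 0) • c =
              ∫ ζ, (csz (w, z2) ζ * G ζ - csz (0, z2) ζ * G ζ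
                - w * (csz (0, z2) ζ * (conj ζ.1 * G ζ))) ∂μ := by
            rw [integral_sub iXY iZ, integral_sub iX iY, integral_const_mul]
            simp [hF, hc, smul_eq_mul]
          rw [heq]
          have hmaj : Integrable (fun ζ : ℂ × ℂ =>
              ‖w‖^2 * ((2 * (1 - ‖z2‖)⁻¹) * ‖G ζ‖)) μ :=
            (hGint.norm.const_mul _).const_mul _
          have hbd : ∀ᵐ ζ ∂μ, ‖csz (w, z2) ζ * G ζ - csz (0, z2) ζ * G ζ
              - w * (csz (0, z2) ζ * (conj ζ.1 * G ζ))‖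
              ≤ ‖w‖^2 * ((2 * (1 - ‖z2‖)⁻¹) * ‖G ζ‖) := by
            filter_upwards [hμtorus] with ζ hζ
            have ha : (1 - conj ζ.1 * w) ≠ 0 :=
              one_sub_ne (by rw [RCLike.norm_conj]; exact hζ.1) (by linarith)
            have hb : (1 - conj ζ.2 * z2) ≠ 0 :=
              one_sub_ne (by rw [RCLike.norm_conj]; exact hζ.2) hz2
            have hre : csz (w, z2) ζ * G ζ - csz (0, z2) ζ * G ζ
                - w * (csz (0, z2) ζ * (conj ζ.1 * G ζ))
                = w^2 * (conj ζ.1)^2 * (csz (w, z2) ζ * G ζ) := by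
              simp only [csz]
              field_simp
              ring
            rw [hre]
            have hcszb : ‖csz ((w:ℂ), z2) ζ‖ ≤ 2 * (1 - ‖z2‖)⁻¹ := by
              refine (csz_bound hwmem hζ.1 hζ.2).trans ?_
              have h2b : (1 - ‖((w:ℂ), z2).1‖)⁻¹ ≤ 2 := by
                rw [show (2:ℝ) = (2⁻¹)⁻¹ by norm_num]
                exact inv_anti₀ (by norm_num) (by simp only; linarith)
              have hnn : (0:ℝ) ≤ (1 - ‖((w:ℂ), z2).2‖)⁻¹ :=
                inv_nonneg.mpr (by simp only; linarith)
              calc (1 - ‖((w:ℂ), z2).1‖)⁻¹ * (1 - ‖((w:ℂ), z2).2‖)⁻¹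
                  ≤ 2 * (1 - ‖((w:ℂ), z2).2‖)⁻¹ := mul_le_mul_of_nonneg_right h2b hnn
                _ = 2 * (1 - ‖z2‖)⁻¹ := by norm_num
            calc ‖w ^ 2 * (conj ζ.1)^2 * (csz ((w:ℂ), z2) ζ * G ζ)‖
                = ‖w‖^2 * (‖csz ((w:ℂ), z2) ζ‖ * ‖G ζ‖) := by
                  simp only [norm_mul, norm_pow, RCLike.norm_conj, hζ.1, one_pow, one_mul]
                  ring
              _ ≤ ‖w‖^2 * ((2 * (1 - ‖z2‖)⁻¹) * ‖G ζ‖) := by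
                  have := mul_le_mul_of_nonneg_right hcszb (norm_nonneg (G ζ))
                  have hnn2 : (0:ℝ) ≤ ‖w‖^2 := by positivity
                  exact mul_le_mul_of_nonneg_left this hnn2
          calc ‖∫ ζ, (csz ((w:ℂ), z2) ζ * G ζ - csz (0, z2) ζ * G ζ
                - w * (csz (0, z2) ζ * (conj ζ.1 * G ζ))) ∂μ‖
              ≤ ∫ ζ, ‖w‖^2 * ((2 * (1 - ‖z2‖)⁻¹) * ‖G ζ‖) ∂μ :=
                norm_integral_le_of_norm_le hmaj hbd
            _ = (2 * (1 - ‖z2‖)⁻¹ * ∫ ζ, ‖G ζ‖ ∂μ) * ‖w ^ 2‖ := by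
                rw [integral_const_mul, integral_const_mul, norm_pow]
                ring
        have hlo := hO.trans_isLittleO
          (Asymptotics.isLittleO_pow_id (by norm_num : 1 < 2))
        simpa using hlo
      -- derivative of the slice of f at 0
      have hu : HasDerivAt (fun w : ℂ => 1 - conj α * φ (w, z2)) (-(conj α * d1)) 0 := by
        simpa using (hφd'.const_mul (conj α)).const_sub 1
      have hprod := hu.mul hFd
      have hfeq : (fun w : ℂ => f (w, z2)) =ᶠ[nhds 0]
          fun w => (1 - conj α * φ (w, z2)) * F (w, z2) := by
        filter_upwards [Metric.ball_mem_nhds (0:ℂ) one_pos] with w hw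
        exact hfval (w, z2) ⟨mem_ball_zero_iff.mp hw, hz2⟩
      have hfd : HasDerivAt (fun w : ℂ => f (w, z2))
          (-(conj α * d1) * F ((0:ℂ), z2) + (1 - conj α * φ ((0:ℂ), z2)) * c) 0 := by
        refine HasDerivAt.congr_of_eventuallyEq ?_ hfeq
        exact hprod
      have hB1f : B1 f (0, z2) =
          -(conj α * d1) * F ((0:ℂ), z2) + (1 - conj α * φ ((0:ℂ), z2)) * c := by
        simp only [B1, if_pos]
        exact hfd.deriv
      have hB1φ : B1 φ (0, z2) = d1 := by
        simp only [B1, if_pos, hd1]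
      have hLHSv : (inner ℂ (kern ((0:ℂ), z2)) ((ContinuousLinearMap.adjoint J) g') : ℂ) =
          (1 - conj α * φ ((0:ℂ), z2)) * c := by
        rw [hLHS (0, z2) h0mem, ← hc]
      have hpsi : psi1 φ α (0, z2) = conj α * d1 / (1 - conj α * φ (0, z2)) := by
        unfold psi1
        rw [hB1φ]
      show _ = B1 f (0, z2) + psi1 φ α (0, z2) * f (0, z2)
      rw [hLHSv, hB1f, hpsi, hfval (0, z2) h0mem]
      field_simp
      ring
    · -- generic case z1 ≠ 0
      have key : (∫ ζ, csz (z1, z2) ζ * (conj ζ.1 * G ζ) ∂μ) =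
          (F (z1, z2) - F (0, z2)) / z1 := by
        rw [eq_div_iff hz10, mul_comm, ← integral_const_mul]
        rw [hF]
        rw [← integral_sub (hint _ hzmem G hGint) (hint _ h0mem G hGint)]
        refine integral_congr_ae ?_
        filter_upwards [hμtorus] with ζ hζ
        have ha : (1 - conj ζ.1 * z1) ≠ 0 :=
          one_sub_ne (by rw [RCLike.norm_conj]; exact hζ.1) hz1
        have hb : (1 - conj ζ.2 * z2) ≠ 0 :=
          one_sub_ne (by rw [RCLike.norm_conj]; exact hζ.2) hz2
        have ha' : 1 - z1 * conj ζ.1 ≠ 0 := by rwa [mul_comm]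
        simp only [csz]
        field_simp
        ring
      rw [hLHS (z1, z2) hzmem, key]
      have hB1f : B1 f (z1, z2) = (f (z1, z2) - f (0, z2)) / z1 := by
        simp only [B1, if_neg hz10]
      have hB1φ : B1 φ (z1, z2) = (φ (z1, z2) - φ (0, z2)) / z1 := by
        simp only [B1, if_neg hz10]
      show _ = B1 f (z1, z2) + psi1 φ α (z1, z2) * f (0, z2)
      rw [hB1f, psi1, hB1φ, hfval _ hzmem, hfval _ h0mem]
      simp only
      field_simp
      ring
end
end

section
/- Let φ be inner on 𝔻² with φ = z₁ψ for inner ψ. The map U on K_ψ ⊕ ψH²₂ defined by U(f₁ + ψf₂) = z₁f₁ + αf₂ (α ∈ 𝕋) is a surjective isometry of K_φ, because ‖f‖² = ‖f₁‖² + ‖f₂‖² and K_φ admits the alternative orthogonal decomposition K_φ = H²₂ ⊕ z₁K_ψ. -/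
noncomputable section

/-- let `φ = z₁ψ` with `ψ` inner on `𝔻²`, so that the model space
admits the orthogonal decompositions `K_φ = K_ψ ⊕ ψH²₂ = H²₂ ⊕ z₁K_ψ`
(in the ambient Hardy space, with `Mz1` multiplication by `z₁` and `Mψ`
multiplication by `ψ`, both isometries).  Then for `α ∈ 𝕋` the map
`U(f₁ + ψf₂) = z₁f₁ + αf₂` (`f₁ ∈ K_ψ`, `f₂ ∈ H²₂`) is a well-defined
surjective isometry of `K_φ`. -/
theorem stmt9
    {E : Type*} [NormedAddCommGroup E] [InnerProductSpace ℂ E] [CompleteSpace E]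
    (Mz1 Mψ : E →L[ℂ] E)
    (hMz1iso : ∀ f : E, ‖Mz1 f‖ = ‖f‖) (hMψiso : ∀ f : E, ‖Mψ f‖ = ‖f‖)
    (Kphi Kpsi H22 : Submodule ℂ E)
    -- K_φ = K_ψ ⊕ ψH²₂ orthogonally
    (horth1 : ∀ x ∈ Kpsi, ∀ y ∈ Submodule.map Mψ.toLinearMap H22,
      @inner ℂ _ _ x y = 0)
    (hdec1 : Kphi = Kpsi ⊔ Submodule.map Mψ.toLinearMap H22)
    -- K_φ = H²₂ ⊕ z₁K_ψ orthogonally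
    (horth2 : ∀ x ∈ H22, ∀ y ∈ Submodule.map Mz1.toLinearMap Kpsi,
      @inner ℂ _ _ x y = 0)
    (hdec2 : Kphi = H22 ⊔ Submodule.map Mz1.toLinearMap Kpsi)
    (α : ℂ) (hα : ‖α‖ = 1) :
    ∃ U : ↥Kphi →ₗᵢ[ℂ] ↥Kphi, Function.Surjective U ∧
      ∀ (f₁ f₂ : E) (_ : f₁ ∈ Kpsi) (_ : f₂ ∈ H22)
        (hmem : f₁ + Mψ f₂ ∈ Kphi),
        (U ⟨f₁ + Mψ f₂, hmem⟩ : E) = Mz1 f₁ + α • f₂ := by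
  have hα0 : α ≠ 0 := by
    intro h; rw [h] at hα; simp at hα
  have hψinj : Function.Injective Mψ := by
    intro a b h
    have h' : ‖a - b‖ = 0 := by rw [← hMψiso]; simp [map_sub, h]
    simpa [sub_eq_zero] using norm_eq_zero.mp h'
  have hzinj : Function.Injective Mz1 := by
    intro a b h
    have h' : ‖a - b‖ = 0 := by rw [← hMz1iso]; simp [map_sub, h]
    simpa [sub_eq_zero] using norm_eq_zero.mp h'
  have hmem1 : ∀ (a : Kpsi) (b : H22), (a : E) + Mψ b ∈ Kphi := by
    intro a b
    rw [hdec1]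
    exact Submodule.add_mem _ (Submodule.mem_sup_left a.2)
      (Submodule.mem_sup_right ⟨b, b.2, rfl⟩)
  have hmem2 : ∀ (a : Kpsi) (b : H22), Mz1 (a : E) + α • (b : E) ∈ Kphi := by
    intro a b
    rw [hdec2]
    exact Submodule.add_mem _ (Submodule.mem_sup_right ⟨a, a.2, rfl⟩)
      (Submodule.mem_sup_left (Submodule.smul_mem _ _ b.2))
  -- the two parametrizations of Kphi
  set S1 : (↥Kpsi × ↥H22) →ₗ[ℂ] E :=
    Kpsi.subtype ∘ₗ LinearMap.fst ℂ ↥Kpsi ↥H22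
      + Mψ.toLinearMap ∘ₗ H22.subtype ∘ₗ LinearMap.snd ℂ ↥Kpsi ↥H22 with hS1
  set T1 : (↥Kpsi × ↥H22) →ₗ[ℂ] ↥Kphi :=
    S1.codRestrict Kphi (fun p => hmem1 p.1 p.2) with hT1
  set S2 : (↥Kpsi × ↥H22) →ₗ[ℂ] E :=
    Mz1.toLinearMap ∘ₗ Kpsi.subtype ∘ₗ LinearMap.fst ℂ ↥Kpsi ↥H22
      + α • (H22.subtype ∘ₗ LinearMap.snd ℂ ↥Kpsi ↥H22) with hS2
  set T2 : (↥Kpsi × ↥H22) →ₗ[ℂ] ↥Kphi :=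
    S2.codRestrict Kphi (fun p => hmem2 p.1 p.2) with hT2
  have hT1coe : ∀ p : ↥Kpsi × ↥H22, (T1 p : E) = (p.1 : E) + Mψ (p.2 : E) := fun p => rfl
  have hT2coe : ∀ p : ↥Kpsi × ↥H22, (T2 p : E) = Mz1 (p.1 : E) + α • (p.2 : E) := fun p => rfl
  have hT1bij : Function.Bijective T1 := by
    constructor
    · intro p q hpq
      have hcoe : (p.1 : E) + Mψ (p.2 : E) = (q.1 : E) + Mψ (q.2 : E) := by
        have := congrArg Subtype.val hpq
        rwa [hT1coe, hT1coe] at this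
      have h0 : ((p.1 : E) - q.1) + (Mψ (p.2 : E) - Mψ (q.2 : E)) = 0 := by
        rw [← add_sub_add_comm, hcoe, sub_self]
      have hmema : (p.1 : E) - q.1 ∈ Kpsi := Submodule.sub_mem _ p.1.2 q.1.2
      have hmemb : Mψ (p.2 : E) - Mψ (q.2 : E) ∈ Submodule.map Mψ.toLinearMap H22 :=
        ⟨(p.2 : E) - q.2, Submodule.sub_mem _ p.2.2 q.2.2, by simp [map_sub]⟩
      have ha' : (p.1 : E) - q.1 = -(Mψ (p.2 : E) - Mψ (q.2 : E)) :=
        eq_neg_of_add_eq_zero_left h0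
      have hzero : @inner ℂ _ _ ((p.1 : E) - q.1) ((p.1 : E) - q.1) = 0 := by
        nth_rewrite 2 [ha']
        rw [inner_neg_right, horth1 _ hmema _ hmemb, neg_zero]
      have h1 : (p.1 : E) - q.1 = 0 := inner_self_eq_zero.mp hzero
      have h2 : Mψ (p.2 : E) = Mψ (q.2 : E) := by
        have := h0
        rw [h1, zero_add, sub_eq_zero] at this
        exact this
      have hp1 : p.1 = q.1 := Subtype.ext (sub_eq_zero.mp h1)
      have hp2 : p.2 = q.2 := Subtype.ext (hψinj h2)
      exact Prod.ext hp1 hp2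
    · intro x
      have hx : (x : E) ∈ Kpsi ⊔ Submodule.map Mψ.toLinearMap H22 := by
        rw [← hdec1]; exact x.2
      rcases Submodule.mem_sup.mp hx with ⟨y, hy, z, hz, hyz⟩
      rcases hz with ⟨b, hb, rfl⟩
      exact ⟨(⟨y, hy⟩, ⟨b, hb⟩), Subtype.ext (by rw [hT1coe]; exact hyz)⟩
  have hT2bij : Function.Bijective T2 := by
    constructor
    · intro p q hpq
      have hcoe : Mz1 ((p.1 : E)) + α • (p.2 : E) = Mz1 ((q.1 : E)) + α • (q.2 : E) := by
        have := congrArg Subtype.val hpq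
        rwa [hT2coe, hT2coe] at this
      have h0 : (Mz1 (p.1 : E) - Mz1 (q.1 : E)) + (α • (p.2 : E) - α • (q.2 : E)) = 0 := by
        rw [← add_sub_add_comm, hcoe, sub_self]
      have hmemc : α • (p.2 : E) - α • (q.2 : E) ∈ H22 :=
        Submodule.sub_mem _ (Submodule.smul_mem _ _ p.2.2) (Submodule.smul_mem _ _ q.2.2)
      have hmemd' : Mz1 (p.1 : E) - Mz1 (q.1 : E) ∈ Submodule.map Mz1.toLinearMap Kpsi :=
        ⟨(p.1 : E) - q.1, Submodule.sub_mem _ p.1.2 q.1.2, by simp [map_sub]⟩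
      have hc' : α • (p.2 : E) - α • (q.2 : E) = -(Mz1 (p.1 : E) - Mz1 (q.1 : E)) :=
        eq_neg_of_add_eq_zero_right h0
      have hzero : @inner ℂ _ _ (α • (p.2 : E) - α • (q.2 : E))
          (α • (p.2 : E) - α • (q.2 : E)) = 0 := by
        nth_rewrite 2 [hc']
        rw [inner_neg_right, horth2 _ hmemc _ hmemd', neg_zero]
      have h1 : α • (p.2 : E) - α • (q.2 : E) = 0 := inner_self_eq_zero.mp hzero
      have h2 : Mz1 (p.1 : E) = Mz1 (q.1 : E) := by
        have := h0
        rw [h1, add_zero, sub_eq_zero] at this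
        exact this
      have hp1 : p.1 = q.1 := Subtype.ext (hzinj h2)
      have hp2 : p.2 = q.2 := by
        rw [← smul_sub, smul_eq_zero] at h1
        rcases h1 with h | h
        · exact absurd h hα0
        · exact Subtype.ext (sub_eq_zero.mp h)
      exact Prod.ext hp1 hp2
    · intro x
      have hx : (x : E) ∈ H22 ⊔ Submodule.map Mz1.toLinearMap Kpsi := by
        rw [← hdec2]; exact x.2
      rcases Submodule.mem_sup.mp hx with ⟨y, hy, z, hz, hyz⟩
      rcases hz with ⟨a, ha, rfl⟩
      refine ⟨(⟨a, ha⟩, ⟨α⁻¹ • y, Submodule.smul_mem _ _ hy⟩), Subtype.ext ?_⟩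
      rw [hT2coe]
      simp only [smul_inv_smul₀ hα0]
      rw [add_comm]
      exact hyz
  let e1 : (↥Kpsi × ↥H22) ≃ₗ[ℂ] ↥Kphi := LinearEquiv.ofBijective T1 hT1bij
  let e2 : (↥Kpsi × ↥H22) ≃ₗ[ℂ] ↥Kphi := LinearEquiv.ofBijective T2 hT2bij
  let Ueq : ↥Kphi ≃ₗ[ℂ] ↥Kphi := e1.symm.trans e2
  have key : ∀ (p : ↥Kpsi × ↥H22) (h : (p.1 : E) + Mψ (p.2 : E) ∈ Kphi),
      Ueq ⟨(p.1 : E) + Mψ (p.2 : E), h⟩ = T2 p := by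
    intro p h
    have he1 : e1.symm ⟨(p.1 : E) + Mψ (p.2 : E), h⟩ = p := by
      rw [LinearEquiv.symm_apply_eq]
      exact Subtype.ext (hT1coe p).symm
    show e2 (e1.symm _) = T2 p
    rw [he1]
    rfl
  have hcoe_dec : ∀ x : ↥Kphi, (x : E) = ((e1.symm x).1 : E) + Mψ ((e1.symm x).2 : E) := by
    intro x
    conv_lhs => rw [← e1.apply_symm_apply x]
    exact hT1coe (e1.symm x)
  have hUcoe : ∀ x : ↥Kphi,
      (Ueq x : E) = Mz1 ((e1.symm x).1 : E) + α • ((e1.symm x).2 : E) := by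
    intro x
    show ((e2 (e1.symm x) : ↥Kphi) : E) = _
    exact hT2coe (e1.symm x)
  have hnorm : ∀ x : ↥Kphi, ‖Ueq x‖ = ‖x‖ := by
    intro x
    obtain ⟨p, hp⟩ : ∃ p, p = e1.symm x := ⟨_, rfl⟩
    have hxd : (x : E) = (p.1 : E) + Mψ (p.2 : E) := by rw [hp]; exact hcoe_dec x
    have hUd : (Ueq x : E) = Mz1 (p.1 : E) + α • (p.2 : E) := by rw [hp]; exact hUcoe x
    have n1 : ‖(x : E)‖ * ‖(x : E)‖
        = ‖(p.1 : E)‖ * ‖(p.1 : E)‖ + ‖(p.2 : E)‖ * ‖(p.2 : E)‖ := by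
      have hz1 : @inner ℂ _ _ ((p.1 : E)) (Mψ (p.2 : E)) = 0 :=
        horth1 _ p.1.2 _ ⟨_, p.2.2, rfl⟩
      have hpy := norm_add_sq_eq_norm_sq_add_norm_sq_of_inner_eq_zero
        ((p.1 : E)) (Mψ (p.2 : E)) hz1
      rw [hxd, hpy, hMψiso]
    have n2 : ‖(Ueq x : E)‖ * ‖(Ueq x : E)‖
        = ‖(p.1 : E)‖ * ‖(p.1 : E)‖ + ‖(p.2 : E)‖ * ‖(p.2 : E)‖ := by
      have hz2 : @inner ℂ _ _ (α • (p.2 : E)) (Mz1 (p.1 : E)) = 0 :=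
        horth2 _ (Submodule.smul_mem _ _ p.2.2) _ ⟨_, p.1.2, rfl⟩
      have hpy := norm_add_sq_eq_norm_sq_add_norm_sq_of_inner_eq_zero
        (α • (p.2 : E)) (Mz1 (p.1 : E)) hz2
      rw [hUd, add_comm, hpy, norm_smul, hα, one_mul, hMz1iso]
      ring
    have hmm : ‖(Ueq x : E)‖ * ‖(Ueq x : E)‖ = ‖(x : E)‖ * ‖(x : E)‖ := by
      rw [n1, n2]
    have h1 : ‖Ueq x‖ = ‖(Ueq x : E)‖ := rfl
    have h2 : ‖x‖ = ‖(x : E)‖ := rfl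
    rw [h1, h2]
    exact (mul_self_inj (norm_nonneg _) (norm_nonneg _)).mp hmm
  refine ⟨⟨Ueq.toLinearMap, hnorm⟩, ?_, ?_⟩
  · intro y
    exact ⟨Ueq.symm y, Ueq.apply_symm_apply y⟩
  · intro f₁ f₂ h1 h2 hmem
    have := key (⟨f₁, h1⟩, ⟨f₂, h2⟩) hmem
    have hc := congrArg Subtype.val this
    rw [hT2coe] at hc
    exact hc
end
end

section
/- Let μ be a finite positive Borel measure on 𝕋² with μ({λ}×𝕋) = 0 = μ(𝕋×{λ}) for all λ ∈ 𝕋, and let (λ₁,λ₂) ∈ 𝕋² \ supp μ. If f₁, f₂ ∈ L²(μ) satisfy (z₁−λ₁)f₂ = (z₂−λ₂)f₁ μ-a.e., then there exists h ∈ L²(μ) with (z₁−λ₁)h = f₁ and (z₂−λ₂)h = f₂ μ-a.e. -/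
open MeasureTheory

set_option maxHeartbeats 1000000

noncomputable section

/-- let `μ` be a finite positive Borel measure on `𝕋²` with
`μ({λ}×𝕋) = 0 = μ(𝕋×{λ})` for all `λ`, and let `(λ₁,λ₂) ∉ supp μ`.  If
`f₁, f₂ ∈ L²(μ)` satisfy `(z₁−λ₁)f₂ = (z₂−λ₂)f₁` μ-a.e., then there exists
`h ∈ L²(μ)` with `(z₁−λ₁)h = f₁` and `(z₂−λ₂)h = f₂` μ-a.e. (exactness of the
Koszul complex at the middle stage). -/
theorem stmt11
    (μ : Measure (ℂ × ℂ)) [IsFiniteMeasure μ]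
    (hμtorus : μ {ζ : ℂ × ℂ | ¬ (‖ζ.1‖ = 1 ∧ ‖ζ.2‖ = 1)} = 0)
    (hlines : ∀ lam : ℂ, μ ({lam} ×ˢ (Set.univ : Set ℂ)) = 0 ∧
      μ ((Set.univ : Set ℂ) ×ˢ {lam}) = 0)
    (lam : ℂ × ℂ) (hlamT : ‖lam.1‖ = 1 ∧ ‖lam.2‖ = 1)
    (hlam : ∃ U : Set (ℂ × ℂ), IsOpen U ∧ lam ∈ U ∧ μ U = 0)
    (f₁ f₂ : Lp ℂ 2 μ)
    (hcompat : (fun ζ : ℂ × ℂ => (ζ.1 - lam.1) * (f₂ : ℂ × ℂ → ℂ) ζ) =ᵐ[μ]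
      fun ζ => (ζ.2 - lam.2) * (f₁ : ℂ × ℂ → ℂ) ζ) :
    ∃ h : Lp ℂ 2 μ,
      ((fun ζ : ℂ × ℂ => (ζ.1 - lam.1) * (h : ℂ × ℂ → ℂ) ζ) =ᵐ[μ]
        (f₁ : ℂ × ℂ → ℂ)) ∧
      ((fun ζ : ℂ × ℂ => (ζ.2 - lam.2) * (h : ℂ × ℂ → ℂ) ζ) =ᵐ[μ]
        (f₂ : ℂ × ℂ → ℂ)) := by
  obtain ⟨U, hUopen, hlamU, hUzero⟩ := hlam
  obtain ⟨ε, hε, hball⟩ := Metric.isOpen_iff.mp hUopen lam hlamU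
  -- the set where the first coordinate is far from lam.1
  set S : Set (ℂ × ℂ) := {ζ : ℂ × ℂ | ε ≤ ‖ζ.1 - lam.1‖} with hS
  have hSmeas : MeasurableSet S := by
    have : IsClosed S := isClosed_le continuous_const (by fun_prop)
    exact this.measurableSet
  -- the candidate function
  set g : ℂ × ℂ → ℂ := S.piecewise
      (fun ζ => (f₁ : ℂ × ℂ → ℂ) ζ / (ζ.1 - lam.1))
      (fun ζ => (f₂ : ℂ × ℂ → ℂ) ζ / (ζ.2 - lam.2)) with hg
  -- a.e. every point is outside U, hence far from lam
  have hae : ∀ᵐ ζ ∂μ, ζ ∉ U := by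
    rw [MeasureTheory.ae_iff]
    simpa using measure_mono_null (fun ζ hζ => by simpa using hζ) hUzero
  have hfar : ∀ᵐ ζ ∂μ, ε ≤ ‖ζ.1 - lam.1‖ ∨ ε ≤ ‖ζ.2 - lam.2‖ := by
    filter_upwards [hae] with ζ hζ
    have hd : ε ≤ dist ζ lam := by
      by_contra hlt
      exact hζ (hball (by simpa [Metric.mem_ball] using lt_of_not_ge hlt))
    rw [Prod.dist_eq] at hd
    rcases le_max_iff.mp hd with he | he
    · left; rw [← dist_eq_norm]; exact he
    · right; rw [← dist_eq_norm]; exact he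
  -- measurability
  have hmeas : AEStronglyMeasurable g μ := by
    apply AEStronglyMeasurable.piecewise hSmeas
    · exact ((Lp.aestronglyMeasurable f₁).aemeasurable.restrict.div
        ((measurable_fst.sub measurable_const).aemeasurable.restrict)).aestronglyMeasurable
    · exact ((Lp.aestronglyMeasurable f₂).aemeasurable.restrict.div
        ((measurable_snd.sub measurable_const).aemeasurable.restrict)).aestronglyMeasurable
  -- the dominating function
  have hbound : MemLp (fun ζ : ℂ × ℂ => ε⁻¹ * (‖(f₁ : ℂ × ℂ → ℂ) ζ‖ + ‖(f₂ : ℂ × ℂ → ℂ) ζ‖)) 2 μ :=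
    ((Lp.memLp f₁).norm.add (Lp.memLp f₂).norm).const_mul ε⁻¹
  have hgmem : MemLp g 2 μ := by
    refine MemLp.of_le hbound hmeas ?_
    filter_upwards [hfar] with ζ hζ
    have h1 : ‖(f₁ : ℂ × ℂ → ℂ) ζ‖ + ‖(f₂ : ℂ × ℂ → ℂ) ζ‖ ≥ 0 := by positivity
    have key : ‖g ζ‖ ≤ ε⁻¹ * (‖(f₁ : ℂ × ℂ → ℂ) ζ‖ + ‖(f₂ : ℂ × ℂ → ℂ) ζ‖) := by
      by_cases hmem : ζ ∈ S
      · have hd : ε ≤ ‖ζ.1 - lam.1‖ := hmem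
        rw [hg, Set.piecewise_eq_of_mem _ _ _ hmem, norm_div]
        rw [div_le_iff₀ (by linarith)]
        calc ‖(f₁ : ℂ × ℂ → ℂ) ζ‖
            ≤ ε⁻¹ * ‖(f₁ : ℂ × ℂ → ℂ) ζ‖ * ε := by
              rw [mul_comm _ ε, ← mul_assoc, mul_inv_cancel₀ (ne_of_gt hε), one_mul]
          _ ≤ ε⁻¹ * (‖(f₁ : ℂ × ℂ → ℂ) ζ‖ + ‖(f₂ : ℂ × ℂ → ℂ) ζ‖) * ‖ζ.1 - lam.1‖ := by
              have := norm_nonneg ((f₂ : ℂ × ℂ → ℂ) ζ)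
              have := norm_nonneg ((f₁ : ℂ × ℂ → ℂ) ζ)
              have hi : (0:ℝ) < ε⁻¹ := by positivity
              apply mul_le_mul
              · nlinarith
              · exact hd
              · linarith
              · positivity
      · have hd : ε ≤ ‖ζ.2 - lam.2‖ := hζ.resolve_left hmem
        rw [hg, Set.piecewise_eq_of_notMem _ _ _ hmem, norm_div]
        rw [div_le_iff₀ (by linarith)]
        calc ‖(f₂ : ℂ × ℂ → ℂ) ζ‖
            ≤ ε⁻¹ * ‖(f₂ : ℂ × ℂ → ℂ) ζ‖ * ε := by
              rw [mul_comm _ ε, ← mul_assoc, mul_inv_cancel₀ (ne_of_gt hε), one_mul]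
          _ ≤ ε⁻¹ * (‖(f₁ : ℂ × ℂ → ℂ) ζ‖ + ‖(f₂ : ℂ × ℂ → ℂ) ζ‖) * ‖ζ.2 - lam.2‖ := by
              have := norm_nonneg ((f₂ : ℂ × ℂ → ℂ) ζ)
              have := norm_nonneg ((f₁ : ℂ × ℂ → ℂ) ζ)
              have hi : (0:ℝ) < ε⁻¹ := by positivity
              apply mul_le_mul
              · nlinarith
              · exact hd
              · linarith
              · positivity
    calc ‖g ζ‖ ≤ ε⁻¹ * (‖(f₁ : ℂ × ℂ → ℂ) ζ‖ + ‖(f₂ : ℂ × ℂ → ℂ) ζ‖) := key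
      _ ≤ ‖ε⁻¹ * (‖(f₁ : ℂ × ℂ → ℂ) ζ‖ + ‖(f₂ : ℂ × ℂ → ℂ) ζ‖)‖ := le_abs_self _
  refine ⟨hgmem.toLp g, ?_, ?_⟩ <;>
    filter_upwards [hfar, hcompat, hgmem.coeFn_toLp] with ζ hζ hc hgζ
  · rw [hgζ]
    by_cases hmem : ζ ∈ S
    · have hd : ε ≤ ‖ζ.1 - lam.1‖ := hmem
      have hne : ζ.1 - lam.1 ≠ 0 := by
        intro h0; rw [h0, norm_zero] at hd; linarith
      rw [hg, Set.piecewise_eq_of_mem _ _ _ hmem, mul_div_cancel₀ _ hne]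
    · have hd : ε ≤ ‖ζ.2 - lam.2‖ := hζ.resolve_left hmem
      have hne : ζ.2 - lam.2 ≠ 0 := by
        intro h0; rw [h0, norm_zero] at hd; linarith
      rw [hg, Set.piecewise_eq_of_notMem _ _ _ hmem]
      field_simp
      linear_combination hc
  · rw [hgζ]
    by_cases hmem : ζ ∈ S
    · have hd : ε ≤ ‖ζ.1 - lam.1‖ := hmem
      have hne : ζ.1 - lam.1 ≠ 0 := by
        intro h0; rw [h0, norm_zero] at hd; linarith
      rw [hg, Set.piecewise_eq_of_mem _ _ _ hmem]
      field_simp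
      linear_combination -hc
    · have hd : ε ≤ ‖ζ.2 - lam.2‖ := hζ.resolve_left hmem
      have hne : ζ.2 - lam.2 ≠ 0 := by
        intro h0; rw [h0, norm_zero] at hd; linarith
      rw [hg, Set.piecewise_eq_of_notMem _ _ _ hmem, mul_div_cancel₀ _ hne]
end
end

section
/- Let μ be a finite positive Borel measure on 𝕋² with no point masses, and suppose (λ₁,λ₂) ∈ 𝕋² is such that there exists c > 0 with μ(V_ε(λ₁,λ₂)) ≥ cε² for all sufficiently small ε > 0, where V_ε is the angular box of side ε centered at (λ₁,λ₂). Then the constant function 1 is not of the form (z₁−λ₁)h₂ + (z₂−λ₂)h₁ for any h₁, h₂ ∈ L²(μ); in particular (λ₁,λ₂) lies in the Taylor joint spectrum of (M_{z₁},M_{z₂}) on L²(μ). -/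
open MeasureTheory
open scoped ENNReal NNReal

noncomputable section

/-- The angular box `V_ε(e^{iτ₁}, e^{iτ₂}) ⊂ 𝕋²` of side `ε`. -/
def Vbox (τ₁ τ₂ ε : ℝ) : Set (ℂ × ℂ) :=
  {ζ | ∃ θ₁ θ₂ : ℝ, |θ₁ - τ₁| < ε / 2 ∧ |θ₂ - τ₂| < ε / 2 ∧
    ζ = (Complex.exp (θ₁ * Complex.I), Complex.exp (θ₂ * Complex.I))}

/-- Nonsingularity (exactness) of the Koszul complex of a commuting pair
`(A, B)` of operators on a module `H`. -/
def koszulNonsingular {H : Type*} [AddCommGroup H] [Module ℂ H]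
    (A B : H →ₗ[ℂ] H) : Prop :=
  (∀ h : H, A h = 0 → B h = 0 → h = 0) ∧
  (∀ h₁ h₂ : H, A h₂ = B h₁ → ∃ h : H, A h = h₁ ∧ B h = h₂) ∧
  (∀ h : H, ∃ h₁ h₂ : H, h = A h₂ - B h₁)

/-- A measurable superset of the angular box: described via `Complex.arg`. -/
def Wbox (τ₁ τ₂ ε : ℝ) : Set (ℂ × ℂ) :=
  {ζ | ‖ζ.1‖ = 1 ∧ ‖ζ.2‖ = 1 ∧
    |(ζ.1 * Complex.exp (-(τ₁ : ℂ) * Complex.I)).arg| ≤ ε / 2 ∧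
    |(ζ.2 * Complex.exp (-(τ₂ : ℂ) * Complex.I)).arg| ≤ ε / 2}

lemma Wbox_meas (τ₁ τ₂ ε : ℝ) : MeasurableSet (Wbox τ₁ τ₂ ε) := by
  have m1 : MeasurableSet {ζ : ℂ × ℂ | ‖ζ.1‖ = 1} :=
    (measurable_fst.norm) (measurableSet_singleton 1)
  have m2 : MeasurableSet {ζ : ℂ × ℂ | ‖ζ.2‖ = 1} :=
    (measurable_snd.norm) (measurableSet_singleton 1)
  have m3 : MeasurableSet
      {ζ : ℂ × ℂ | |(ζ.1 * Complex.exp (-(τ₁ : ℂ) * Complex.I)).arg| ≤ ε / 2} :=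
    measurableSet_le ((Complex.measurable_arg.comp
      (measurable_fst.mul_const _)).abs) measurable_const
  have m4 : MeasurableSet
      {ζ : ℂ × ℂ | |(ζ.2 * Complex.exp (-(τ₂ : ℂ) * Complex.I)).arg| ≤ ε / 2} :=
    measurableSet_le ((Complex.measurable_arg.comp
      (measurable_snd.mul_const _)).abs) measurable_const
  exact m1.inter (m2.inter (m3.inter m4))

lemma Wbox_anti (τ₁ τ₂ : ℝ) {ε ε' : ℝ} (h : ε ≤ ε') :
    Wbox τ₁ τ₂ ε ⊆ Wbox τ₁ τ₂ ε' := by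
  rintro ζ ⟨h1, h2, h3, h4⟩
  exact ⟨h1, h2, h3.trans (by linarith), h4.trans (by linarith)⟩

lemma arg_exp_eq {x : ℝ} (h1 : -Real.pi < x) (h2 : x ≤ Real.pi) :
    (Complex.exp (x * Complex.I)).arg = x := by
  rw [Complex.exp_mul_I]
  exact Complex.arg_cos_add_sin_mul_I ⟨h1, h2⟩

lemma Vbox_subset_Wbox (τ₁ τ₂ : ℝ) {ε : ℝ} (hε : 0 < ε) (hε1 : ε ≤ 1) :
    Vbox τ₁ τ₂ ε ⊆ Wbox τ₁ τ₂ ε := by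
  rintro ζ ⟨θ₁, θ₂, hθ₁, hθ₂, rfl⟩
  have hπ : ε / 2 < Real.pi := by
    have := Real.pi_gt_three; linarith
  have key : ∀ θ τ : ℝ, |θ - τ| < ε / 2 →
      ‖Complex.exp (θ * Complex.I)‖ = 1 ∧
      |(Complex.exp (θ * Complex.I) * Complex.exp (-(τ : ℂ) * Complex.I)).arg| ≤ ε / 2 := by
    intro θ τ hθτ
    have hmul : Complex.exp (θ * Complex.I) * Complex.exp (-(τ : ℂ) * Complex.I)
        = Complex.exp (((θ - τ : ℝ) : ℂ) * Complex.I) := by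
      rw [← Complex.exp_add]
      push_cast
      ring_nf
    have habs := abs_lt.1 hθτ
    have harg : (Complex.exp (θ * Complex.I) * Complex.exp (-(τ : ℂ) * Complex.I)).arg
        = θ - τ := by
      rw [hmul]; exact arg_exp_eq (by linarith) (by linarith)
    refine ⟨?_, ?_⟩
    · rw [Complex.norm_exp_ofReal_mul_I]
    · rw [harg]; exact hθτ.le
  obtain ⟨k1, k2⟩ := key θ₁ τ₁ hθ₁
  obtain ⟨k3, k4⟩ := key θ₂ τ₂ hθ₂
  exact ⟨k1, k3, k2, k4⟩

lemma key_bound {z : ℂ} {τ ε : ℝ}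
    (hz : ‖z‖ = 1)
    (ha : |(z * Complex.exp (-(τ : ℂ) * Complex.I)).arg| ≤ ε / 2)
    (hε1 : ε ≤ 1) :
    ‖z - Complex.exp ((τ : ℂ) * Complex.I)‖ ≤ ε := by
  set w := z * Complex.exp (-(τ : ℂ) * Complex.I) with hw
  have habsw : ‖w‖ = 1 := by
    rw [hw, norm_mul, Complex.norm_exp]
    simp [hz]
  have hwe : w = Complex.exp ((w.arg : ℂ) * Complex.I) := by
    conv_lhs => rw [← Complex.norm_mul_exp_arg_mul_I w]
    rw [habsw]; simp
  have h2 : z = w * Complex.exp ((τ : ℂ) * Complex.I) := by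
    rw [hw, mul_assoc, ← Complex.exp_add]
    simp
  have h3 : z - Complex.exp ((τ : ℂ) * Complex.I)
      = (w - 1) * Complex.exp ((τ : ℂ) * Complex.I) := by
    rw [h2]; ring
  have hnorm1 : ‖Complex.exp ((τ : ℂ) * Complex.I)‖ = 1 := by
    rw [Complex.norm_exp_ofReal_mul_I]
  rw [h3, norm_mul, hnorm1, mul_one]
  have hargle : |w.arg| ≤ ε / 2 := ha
  have h4 : ‖(w.arg : ℂ) * Complex.I‖ ≤ 1 := by
    rw [norm_mul, Complex.norm_I, mul_one, Complex.norm_real, Real.norm_eq_abs]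
    linarith
  calc ‖w - 1‖ = ‖Complex.exp ((w.arg : ℂ) * Complex.I) - 1‖ := by
        rw [← hwe]
    _ ≤ 2 * ‖(w.arg : ℂ) * Complex.I‖ := Complex.norm_exp_sub_one_le h4
    _ = 2 * |w.arg| := by rw [norm_mul, Complex.norm_I, mul_one, Complex.norm_real, Real.norm_eq_abs]
    _ ≤ ε := by linarith

lemma Wbox_inter_subset (τ₁ τ₂ δ : ℝ) (hδ : 0 < δ) :
    (⋂ n : ℕ, Wbox τ₁ τ₂ (δ / (n + 2))) ⊆
      {(Complex.exp ((τ₁ : ℂ) * Complex.I), Complex.exp ((τ₂ : ℂ) * Complex.I))} := by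
  intro ζ hζ
  simp only [Set.mem_iInter] at hζ
  have key : ∀ (z : ℂ) (τ : ℝ), ‖z‖ = 1 →
      (∀ n : ℕ, |(z * Complex.exp (-(τ : ℂ) * Complex.I)).arg| ≤ δ / (n + 2) / 2) →
      z = Complex.exp ((τ : ℂ) * Complex.I) := by
    intro z τ hz hn
    set w := z * Complex.exp (-(τ : ℂ) * Complex.I) with hw
    have habsw : ‖w‖ = 1 := by
      rw [hw, norm_mul, Complex.norm_exp]
      simp [hz]
    have harg : w.arg = 0 := by
      by_contra h
      have hpos : 0 < |w.arg| := abs_pos.2 h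
      obtain ⟨n, hn'⟩ := exists_nat_gt (δ / |w.arg|)
      have h2 : δ / (n + 2) / 2 < |w.arg| := by
        have hn2 : (0:ℝ) < n + 2 := by positivity
        have : δ / |w.arg| < n + 2 := by linarith [hn'.trans_le (by linarith : (n:ℝ) ≤ n + 2)]
        have := (div_lt_iff₀ hpos).1 this
        rw [div_div]
        rw [div_lt_iff₀ (by positivity)]
        nlinarith
      exact absurd (hn n) (not_le.2 h2)
    have hw1 : w = 1 := by
      have := Complex.norm_mul_exp_arg_mul_I w
      rw [habsw, harg] at this
      simpa using this.symm
    have : z * Complex.exp (-(τ : ℂ) * Complex.I) * Complex.exp ((τ : ℂ) * Complex.I)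
        = Complex.exp ((τ : ℂ) * Complex.I) := by
      rw [← hw, hw1, one_mul]
    rw [mul_assoc, ← Complex.exp_add] at this
    simpa using this
  have h1 := key ζ.1 τ₁ (hζ 0).1 (fun n => (hζ n).2.2.1)
  have h2 := key ζ.2 τ₂ (hζ 0).2.1 (fun n => (hζ n).2.2.2)
  exact Set.mem_singleton_iff.2 (Prod.ext h1 h2)


lemma my_sq (a b : ℝ≥0∞) : (a + b) ^ 2 ≤ 4 * (a ^ 2 + b ^ 2) := by
  have h : a + b ≤ 2 * (a ⊔ b) := by
    rw [two_mul]; exact add_le_add le_sup_left le_sup_right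
  calc (a + b) ^ 2 ≤ (2 * (a ⊔ b)) ^ 2 := by gcongr
    _ = 4 * (a ⊔ b) ^ 2 := by ring
    _ ≤ 4 * (a ^ 2 + b ^ 2) := by
        gcongr
        rcases le_total a b with h' | h'
        · rw [sup_eq_right.2 h']; exact le_add_self
        · rw [sup_eq_left.2 h']; exact le_self_add

lemma not_rep
    (μ : Measure (ℂ × ℂ)) [IsFiniteMeasure μ]
    (hnoatom : ∀ x : ℂ × ℂ, μ {x} = 0)
    (τ₁ τ₂ : ℝ) (lam : ℂ × ℂ)
    (hlam : lam = (Complex.exp (τ₁ * Complex.I), Complex.exp (τ₂ * Complex.I)))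
    (hbox : ∃ c > (0:ℝ), ∃ ε₀ > (0:ℝ), ∀ ε : ℝ, 0 < ε → ε < ε₀ →
      ENNReal.ofReal (c * ε ^ 2) ≤ μ (Vbox τ₁ τ₂ ε)) :
    ¬ ∃ h₁ h₂ : Lp ℂ 2 μ,
      (fun _ : ℂ × ℂ => (1:ℂ)) =ᵐ[μ] fun ζ =>
        (ζ.1 - lam.1) * (h₂ : ℂ × ℂ → ℂ) ζ + (ζ.2 - lam.2) * (h₁ : ℂ × ℂ → ℂ) ζ := by
  subst hlam
  rintro ⟨h₁, h₂, heq⟩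
  obtain ⟨c, hc, ε₀, hε₀, hbox'⟩ := hbox
  set f₁ : ℂ × ℂ → ℂ := (h₁ : ℂ × ℂ → ℂ) with hf₁
  set f₂ : ℂ × ℂ → ℂ := (h₂ : ℂ × ℂ → ℂ) with hf₂
  have hK1 : AEMeasurable (fun ζ => (‖f₁ ζ‖₊ : ℝ≥0∞)) μ :=
    (Lp.aestronglyMeasurable h₁).enorm
  have hK2 : AEMeasurable (fun ζ => (‖f₂ ζ‖₊ : ℝ≥0∞)) μ :=
    (Lp.aestronglyMeasurable h₂).enorm
  set K : ℂ × ℂ → ℝ≥0∞ :=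
    fun ζ => (‖f₁ ζ‖₊ : ℝ≥0∞) ^ 2 + (‖f₂ ζ‖₊ : ℝ≥0∞) ^ 2 with hKdef
  set ν := μ.withDensity K with hν
  have hsq : ∀ g : Lp ℂ 2 μ, ∫⁻ ζ, (‖(g : ℂ × ℂ → ℂ) ζ‖₊ : ℝ≥0∞) ^ 2 ∂μ < ⊤ := by
    intro g
    have h := (Lp.memLp g).2
    rw [eLpNorm_lt_top_iff_lintegral_rpow_enorm_lt_top two_ne_zero ENNReal.ofNat_ne_top] at h
    have h' : ∫⁻ ζ, ‖(g : ℂ × ℂ → ℂ) ζ‖ₑ ^ 2 ∂μ < ⊤ := by simpa [ENNReal.rpow_two] using h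
    exact h'
  have hνfin : ν Set.univ < ⊤ := by
    rw [hν, withDensity_apply _ MeasurableSet.univ, Measure.restrict_univ, hKdef,
      lintegral_add_left' (hK1.pow_const 2)]
    exact ENNReal.add_lt_top.2 ⟨hsq h₁, hsq h₂⟩
  set G : ℂ × ℂ → ℝ≥0∞ := fun ζ => (‖f₁ ζ‖₊ : ℝ≥0∞) + (‖f₂ ζ‖₊ : ℝ≥0∞) with hGdef
  have hGmeas : AEMeasurable G μ := hK1.add hK2
  -- main per-ε estimate
  have main : ∀ ε : ℝ, 0 < ε → ε < ε₀ → ε ≤ 1 →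
      ENNReal.ofReal c ≤ 4 * ν (Wbox τ₁ τ₂ ε) := by
    intro ε hε hεε₀ hε1
    have hWmeas := Wbox_meas τ₁ τ₂ ε
    set W := Wbox τ₁ τ₂ ε with hW
    set m := μ W with hm
    have hmlow : ENNReal.ofReal (c * ε ^ 2) ≤ m :=
      le_trans (hbox' ε hε hεε₀) (measure_mono (Vbox_subset_Wbox τ₁ τ₂ hε hε1))
    have hcε : 0 < c * ε ^ 2 := by positivity
    have hm0 : m ≠ 0 := by
      intro h0
      rw [h0, le_zero_iff, ENNReal.ofReal_eq_zero] at hmlow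
      linarith
    have hmtop : m ≠ ⊤ := (measure_lt_top μ W).ne
    -- step 1 : m ≤ ofReal ε * ∫_W G
    have s1 : m ≤ ENNReal.ofReal ε * ∫⁻ ζ in W, G ζ ∂μ := by
      rw [← lintegral_const_mul' _ _ ENNReal.ofReal_ne_top, hm, ← setLIntegral_one]
      refine lintegral_mono_ae ?_
      rw [ae_restrict_iff' hWmeas]
      filter_upwards [heq] with ζ hζ hζW
      have hζ' : (1 : ℂ) =
          (ζ.1 - Complex.exp ((τ₁:ℝ) * Complex.I)) * f₂ ζ +
          (ζ.2 - Complex.exp ((τ₂:ℝ) * Complex.I)) * f₁ ζ := hζ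
      have hb1 : ‖ζ.1 - Complex.exp ((τ₁:ℝ) * Complex.I)‖ ≤ ε :=
        key_bound hζW.1 hζW.2.2.1 hε1
      have hb2 : ‖ζ.2 - Complex.exp ((τ₂:ℝ) * Complex.I)‖ ≤ ε :=
        key_bound hζW.2.1 hζW.2.2.2 hε1
      have hre : (1:ℝ) ≤ ε * ‖f₁ ζ‖ + ε * ‖f₂ ζ‖ := by
        calc (1:ℝ) = ‖(1:ℂ)‖ := by norm_num
          _ = ‖(ζ.1 - Complex.exp ((τ₁:ℝ) * Complex.I)) * f₂ ζ +
                (ζ.2 - Complex.exp ((τ₂:ℝ) * Complex.I)) * f₁ ζ‖ := by rw [← hζ']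
          _ ≤ ‖ζ.1 - Complex.exp ((τ₁:ℝ) * Complex.I)‖ * ‖f₂ ζ‖ +
                ‖ζ.2 - Complex.exp ((τ₂:ℝ) * Complex.I)‖ * ‖f₁ ζ‖ := by
              refine (norm_add_le _ _).trans ?_
              rw [norm_mul, norm_mul]
          _ ≤ ε * ‖f₂ ζ‖ + ε * ‖f₁ ζ‖ := by
              refine add_le_add ?_ ?_ <;>
                exact mul_le_mul_of_nonneg_right (by assumption) (norm_nonneg _)
          _ = ε * ‖f₁ ζ‖ + ε * ‖f₂ ζ‖ := by ring
      have h1 := ENNReal.ofReal_le_ofReal hre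
      rw [ENNReal.ofReal_one] at h1
      refine h1.trans (le_of_eq ?_)
      rw [ENNReal.ofReal_add (by positivity) (by positivity),
        ENNReal.ofReal_mul hε.le, ENNReal.ofReal_mul hε.le,
        ofReal_norm, ofReal_norm, enorm_eq_nnnorm, enorm_eq_nnnorm, hGdef, mul_add]
    -- step 2 : Cauchy-Schwarz
    have conj : Real.HolderConjugate 2 2 := Real.holderConjugate_iff.mpr ⟨one_lt_two, by norm_num⟩
    have s2 : ∫⁻ ζ in W, G ζ ∂μ ≤
        (∫⁻ ζ in W, G ζ ^ (2:ℝ) ∂μ) ^ (1/2:ℝ) * m ^ (1/2:ℝ) := by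
      have h := ENNReal.lintegral_mul_le_Lp_mul_Lq (μ.restrict W) conj
        hGmeas.restrict (aemeasurable_const (b := (1:ℝ≥0∞)))
      simpa [ENNReal.one_rpow, lintegral_one, Measure.restrict_apply_univ, one_div] using h
    -- step 3 : bound G² by 4K
    have s3 : (∫⁻ ζ in W, G ζ ^ (2:ℝ) ∂μ) ≤ 4 * ν W := by
      rw [hν, withDensity_apply _ hWmeas,
        ← lintegral_const_mul' _ _ (by norm_num : (4:ℝ≥0∞) ≠ ⊤)]
      refine lintegral_mono fun ζ => ?_
      rw [ENNReal.rpow_two]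
      exact my_sq _ _
    have s4 : m ≤ ENNReal.ofReal ε * ((4 * ν W) ^ (1/2:ℝ) * m ^ (1/2:ℝ)) := by
      refine s1.trans (mul_le_mul_right ?_ _)
      refine s2.trans (mul_le_mul_left ?_ _)
      exact ENNReal.rpow_le_rpow s3 (by norm_num)
    have hm12 : m ^ (1/2:ℝ) ≠ 0 := by
      simp [ENNReal.rpow_eq_zero_iff, hm0, hmtop]
    have hm12top : m ^ (1/2:ℝ) ≠ ⊤ := ENNReal.rpow_ne_top_of_nonneg (by norm_num) hmtop
    have s5 : m ^ (1/2:ℝ) ≤ ENNReal.ofReal ε * (4 * ν W) ^ (1/2:ℝ) := by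
      refine (ENNReal.mul_le_mul_iff_left hm12 hm12top).1 ?_
      calc m ^ (1/2:ℝ) * m ^ (1/2:ℝ) = m := by
            rw [← ENNReal.rpow_add _ _ hm0 hmtop]
            norm_num
        _ ≤ ENNReal.ofReal ε * ((4 * ν W) ^ (1/2:ℝ) * m ^ (1/2:ℝ)) := s4
        _ = ENNReal.ofReal ε * (4 * ν W) ^ (1/2:ℝ) * m ^ (1/2:ℝ) := by ring
    have hsq2 : ∀ x : ℝ≥0∞, (x ^ (1/2:ℝ)) ^ 2 = x := by
      intro x
      rw [← ENNReal.rpow_natCast (x ^ (1/2:ℝ)) 2, ← ENNReal.rpow_mul]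
      norm_num
    have s6 : m ≤ (ENNReal.ofReal ε) ^ 2 * (4 * ν W) := by
      calc m = (m ^ (1/2:ℝ)) ^ 2 := (hsq2 m).symm
        _ ≤ (ENNReal.ofReal ε * (4 * ν W) ^ (1/2:ℝ)) ^ 2 := by gcongr
        _ = (ENNReal.ofReal ε) ^ 2 * ((4 * ν W) ^ (1/2:ℝ)) ^ 2 := mul_pow _ _ _
        _ = (ENNReal.ofReal ε) ^ 2 * (4 * ν W) := by rw [hsq2]
    have hlow2 : ENNReal.ofReal c * (ENNReal.ofReal ε) ^ 2 ≤
        4 * ν W * (ENNReal.ofReal ε) ^ 2 := by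
      calc ENNReal.ofReal c * (ENNReal.ofReal ε) ^ 2
          = ENNReal.ofReal (c * ε ^ 2) := by
            rw [← ENNReal.ofReal_pow hε.le, ← ENNReal.ofReal_mul hc.le]
        _ ≤ m := hmlow
        _ ≤ (ENNReal.ofReal ε) ^ 2 * (4 * ν W) := s6
        _ = 4 * ν W * (ENNReal.ofReal ε) ^ 2 := mul_comm _ _
    have hε2 : (ENNReal.ofReal ε) ^ 2 ≠ 0 :=
      pow_ne_zero _ (ENNReal.ofReal_pos.2 hε).ne'
    have hε2top : (ENNReal.ofReal ε) ^ 2 ≠ ⊤ := ENNReal.pow_ne_top ENNReal.ofReal_ne_top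
    exact (ENNReal.mul_le_mul_iff_left hε2 hε2top).1 hlow2
  -- limiting argument
  set δ := min ε₀ 1 with hδ
  have hδpos : 0 < δ := lt_min hε₀ one_pos
  have hδ1 : δ ≤ 1 := min_le_right _ _
  have hδε₀ : δ ≤ ε₀ := min_le_left _ _
  set s : ℕ → Set (ℂ × ℂ) := fun n => Wbox τ₁ τ₂ (δ / (n + 2)) with hs
  have hεn : ∀ n : ℕ, 0 < δ / (n + 2) ∧ δ / (n + 2) < ε₀ ∧ δ / (n + 2) ≤ 1 := by
    intro n
    have h2 : (0:ℝ) < (n:ℝ) + 2 := by positivity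
    have hle : δ / ((n:ℝ) + 2) ≤ δ / 2 :=
      div_le_div_of_nonneg_left hδpos.le two_pos (by linarith)
    refine ⟨by positivity, ?_, ?_⟩
    · calc δ / ((n:ℝ) + 2) ≤ δ / 2 := hle
        _ < δ := by linarith
        _ ≤ ε₀ := hδε₀
    · calc δ / ((n:ℝ) + 2) ≤ δ / 2 := hle
        _ ≤ 1 := by linarith
  have hlower : ∀ n : ℕ, ENNReal.ofReal c ≤ 4 * ν (s n) := fun n =>
    main _ (hεn n).1 (hεn n).2.1 (hεn n).2.2
  have hanti : Antitone s := by
    intro a b hab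
    refine Wbox_anti τ₁ τ₂ ?_
    refine div_le_div_of_nonneg_left hδpos.le (by positivity) ?_
    have : (a:ℝ) ≤ b := Nat.cast_le.2 hab
    linarith
  have htend : Filter.Tendsto (ν ∘ s) Filter.atTop (nhds (ν (⋂ n, s n))) :=
    tendsto_measure_iInter_atTop (fun n => (Wbox_meas _ _ _).nullMeasurableSet) hanti
      ⟨0, ((measure_mono (Set.subset_univ _)).trans_lt hνfin).ne⟩
  have hint0 : ν (⋂ n, s n) = 0 := by
    have hsub := Wbox_inter_subset τ₁ τ₂ δ hδpos
    have hsing : ν {((Complex.exp ((τ₁:ℝ) * Complex.I),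
        Complex.exp ((τ₂:ℝ) * Complex.I)) : ℂ × ℂ)} = 0 := by
      rw [hν, withDensity_apply _ (measurableSet_singleton _),
        Measure.restrict_eq_zero.2 (hnoatom _), lintegral_zero_measure]
    exact le_antisymm ((measure_mono hsub).trans hsing.le) zero_le
  have htend4 : Filter.Tendsto (fun n => 4 * ν (s n)) Filter.atTop
      (nhds (4 * ν (⋂ n, s n))) :=
    ENNReal.Tendsto.const_mul htend (Or.inr (by norm_num))
  have hfinal : ENNReal.ofReal c ≤ 4 * ν (⋂ n, s n) :=
    ge_of_tendsto' htend4 hlower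
  rw [hint0, mul_zero, le_zero_iff, ENNReal.ofReal_eq_zero] at hfinal
  linarith

/-- let `μ` be a finite positive Borel measure on `𝕋²` with no
point masses and `(λ₁,λ₂) = (e^{iτ₁}, e^{iτ₂})` a point with
`μ(V_ε(λ₁,λ₂)) ≥ cε²` for all small `ε`.  Then `1` is not of the form
`(z₁−λ₁)h₂ + (z₂−λ₂)h₁` with `h₁, h₂ ∈ L²(μ)`; in particular `(λ₁,λ₂)` lies in
the Taylor joint spectrum of `(M_{z₁}, M_{z₂})` on `L²(μ)`. -/
theorem stmt13
    (μ : Measure (ℂ × ℂ)) [IsFiniteMeasure μ]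
    (hμtorus : μ {ζ : ℂ × ℂ | ¬ (‖ζ.1‖ = 1 ∧ ‖ζ.2‖ = 1)} = 0)
    (hnoatom : ∀ x : ℂ × ℂ, μ {x} = 0)
    (τ₁ τ₂ : ℝ) (lam : ℂ × ℂ)
    (hlam : lam = (Complex.exp (τ₁ * Complex.I), Complex.exp (τ₂ * Complex.I)))
    (hbox : ∃ c > (0:ℝ), ∃ ε₀ > (0:ℝ), ∀ ε : ℝ, 0 < ε → ε < ε₀ →
      ENNReal.ofReal (c * ε ^ 2) ≤ μ (Vbox τ₁ τ₂ ε))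
    (Mz1 Mz2 : Lp ℂ 2 μ →L[ℂ] Lp ℂ 2 μ)
    (hMz1 : ∀ f : Lp ℂ 2 μ, (Mz1 f : ℂ × ℂ → ℂ) =ᵐ[μ] fun ζ => ζ.1 * f ζ)
    (hMz2 : ∀ f : Lp ℂ 2 μ, (Mz2 f : ℂ × ℂ → ℂ) =ᵐ[μ] fun ζ => ζ.2 * f ζ) :
    (¬ ∃ h₁ h₂ : Lp ℂ 2 μ,
      (fun _ : ℂ × ℂ => (1:ℂ)) =ᵐ[μ] fun ζ =>
        (ζ.1 - lam.1) * (h₂ : ℂ × ℂ → ℂ) ζ +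
          (ζ.2 - lam.2) * (h₁ : ℂ × ℂ → ℂ) ζ) ∧
    ¬ koszulNonsingular
        (Mz1.toLinearMap - lam.1 • LinearMap.id)
        (Mz2.toLinearMap - lam.2 • LinearMap.id) := by
  have key := not_rep μ hnoatom τ₁ τ₂ lam hlam hbox
  refine ⟨key, fun hk => key ?_⟩
  obtain ⟨-, -, hsurj⟩ := hk
  have hone : MemLp (fun _ : ℂ × ℂ => (1:ℂ)) 2 μ := memLp_const 1
  obtain ⟨g₁, g₂, hg⟩ := hsurj (hone.toLp _)
  refine ⟨-g₁, g₂, ?_⟩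
  have h1 : (fun _ : ℂ × ℂ => (1:ℂ)) =ᵐ[μ]
      ((hone.toLp (fun _ : ℂ × ℂ => (1:ℂ))) : ℂ × ℂ → ℂ) :=
    hone.coeFn_toLp.symm
  have h2 : ((Mz1.toLinearMap - lam.1 • LinearMap.id : Lp ℂ 2 μ →ₗ[ℂ] Lp ℂ 2 μ) g₂ -
      (Mz2.toLinearMap - lam.2 • LinearMap.id : Lp ℂ 2 μ →ₗ[ℂ] Lp ℂ 2 μ) g₁) =
      (Mz1 g₂ - lam.1 • g₂) - (Mz2 g₁ - lam.2 • g₁) := by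
    simp [LinearMap.sub_apply, LinearMap.smul_apply]
  refine h1.trans ?_
  rw [hg, h2]
  have e1 := Lp.coeFn_sub (Mz1 g₂ - lam.1 • g₂) (Mz2 g₁ - lam.2 • g₁)
  have e2 := Lp.coeFn_sub (Mz1 g₂) (lam.1 • g₂)
  have e3 := Lp.coeFn_sub (Mz2 g₁) (lam.2 • g₁)
  have e4 := Lp.coeFn_smul lam.1 g₂
  have e5 := Lp.coeFn_smul lam.2 g₁
  have e6 := hMz1 g₂
  have e7 := hMz2 g₁
  have e8 := Lp.coeFn_neg g₁
  filter_upwards [e1, e2, e3, e4, e5, e6, e7, e8] with ζ q1 q2 q3 q4 q5 q6 q7 q8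
  simp only [Pi.sub_apply, Pi.smul_apply, Pi.neg_apply, smul_eq_mul] at q1 q2 q3 q4 q5 q8 ⊢
  rw [q1, q2, q3, q4, q5, q6, q7, q8]
  ring
end
end

section
/- Let μ be a finite positive Borel measure on 𝕋² with no point masses satisfying: (a) μ({λ}×𝕋) = 0 = μ(𝕋×{λ}) for all λ ∈ 𝕋; (b) there is a dense subset S of supp μ such that for each (λ₁,λ₂) ∈ S there is c > 0 with μ(V_ε(λ₁,λ₂)) ≥ cε² for all sufficiently small ε. Then the Taylor joint spectrum of (M_{z₁}, M_{z₂}) on L²(μ) equals supp μ. -/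
open MeasureTheory

noncomputable section

/-- The Taylor joint spectrum of a commuting pair of continuous linear
operators: the set of `(λ₁,λ₂)` where the Koszul complex of
`(T₁−λ₁, T₂−λ₂)` is singular. -/
def taylorSpectrum {H : Type*} [NormedAddCommGroup H] [NormedSpace ℂ H]
    (T₁ T₂ : H →L[ℂ] H) : Set (ℂ × ℂ) :=
  {lam | ¬ koszulNonsingular
    (T₁.toLinearMap - lam.1 • LinearMap.id)
    (T₂.toLinearMap - lam.2 • LinearMap.id)}

/-- The closed support of a measure: points all of whose open neighborhoods
have positive measure. -/
def measSupport {X : Type*} [TopologicalSpace X] [MeasurableSpace X]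
    (μ : Measure X) : Set X :=
  {x | ∀ U : Set X, IsOpen U → x ∈ U → μ U ≠ 0}

section Auxiliary

open Filter Function

/-- If every `y` has an approximate preimage with norm control, `f` is surjective. -/
theorem stmt14_surj_of_approx {E F : Type*} [NormedAddCommGroup E] [NormedSpace ℂ E]
    [CompleteSpace E] [NormedAddCommGroup F] [NormedSpace ℂ F]
    (f : E →L[ℂ] F) {C : ℝ} (C0 : 0 ≤ C)
    (hC : ∀ y : F, ∃ x, ‖y - f x‖ ≤ 1 / 2 * ‖y‖ ∧ ‖x‖ ≤ C * ‖y‖) :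
    Surjective f := by
  choose g hg using hC
  let h : F → F := fun y => y - f (g y)
  have hle : ∀ y, ‖h y‖ ≤ 1 / 2 * ‖y‖ := fun y => (hg y).1
  intro y
  have hnle : ∀ n : ℕ, ‖h^[n] y‖ ≤ (1 / 2) ^ n * ‖y‖ := by
    intro n
    induction n with
    | zero => simp
    | succ n IH =>
      rw [iterate_succ']
      refine le_trans (hle _) ?_
      rw [pow_succ', mul_assoc]
      gcongr
  let u : ℕ → E := fun n => g (h^[n] y)
  have ule : ∀ n, ‖u n‖ ≤ (1 / 2) ^ n * (C * ‖y‖) := fun n => by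
    refine le_trans (hg _).2 ?_
    calc C * ‖h^[n] y‖ ≤ C * ((1 / 2) ^ n * ‖y‖) := by gcongr; exact hnle n
      _ = (1 / 2) ^ n * (C * ‖y‖) := by ring
  have sNu : Summable fun n => ‖u n‖ := by
    refine Summable.of_nonneg_of_le (fun n => norm_nonneg _) ule ?_
    exact Summable.mul_right _ (summable_geometric_of_lt_one (by norm_num) (by norm_num))
  have su : Summable u := sNu.of_norm
  refine ⟨tsum u, ?_⟩
  have fsumeq : ∀ n : ℕ, f (∑ i ∈ Finset.range n, u i) = y - h^[n] y := by
    intro n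
    induction n with
    | zero => simp
    | succ n IH => rw [Finset.sum_range_succ, f.map_add, IH, iterate_succ_apply', sub_add]
  have h1 : Tendsto (fun n => ∑ i ∈ Finset.range n, u i) atTop (nhds (tsum u)) :=
    su.hasSum.tendsto_sum_nat
  have L₁ : Tendsto (fun n => f (∑ i ∈ Finset.range n, u i)) atTop (nhds (f (tsum u))) :=
    (f.continuous.tendsto _).comp h1
  simp only [fsumeq] at L₁
  have L₂ : Tendsto (fun n => y - h^[n] y) atTop (nhds (y - 0)) := by
    refine tendsto_const_nhds.sub ?_
    rw [tendsto_iff_norm_sub_tendsto_zero]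
    simp only [sub_zero]
    refine squeeze_zero (fun _ => norm_nonneg _) hnle ?_
    rw [← zero_mul ‖y‖]
    exact (tendsto_pow_atTop_nhds_zero_of_lt_one (by norm_num) (by norm_num)).mul tendsto_const_nhds
  have := tendsto_nhds_unique L₁ L₂
  rw [sub_zero] at this
  exact this

/-- Surjectivity is stable under small perturbation. -/
theorem stmt14_surj_perturb {E F : Type*} [NormedAddCommGroup E] [NormedSpace ℂ E]
    [CompleteSpace E] [NormedAddCommGroup F] [NormedSpace ℂ F] [CompleteSpace F]
    (f : E →L[ℂ] F) (hf : Surjective f) :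
    ∃ δ > (0:ℝ), ∀ f' : E →L[ℂ] F, ‖f' - f‖ < δ → Surjective f' := by
  obtain ⟨C, Cpos, hC⟩ := f.exists_preimage_norm_le hf
  refine ⟨1 / (2 * C), by positivity, fun f' hf' => ?_⟩
  refine stmt14_surj_of_approx f' (C := C) Cpos.le fun y => ?_
  obtain ⟨x, hx, hxn⟩ := hC y
  refine ⟨x, ?_, hxn⟩
  have : y - f' x = (f - f') x := by simp [ContinuousLinearMap.sub_apply, hx]
  rw [this]
  calc ‖(f - f') x‖ ≤ ‖f - f'‖ * ‖x‖ := (f - f').le_opNorm x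
    _ ≤ (1 / (2 * C)) * (C * ‖y‖) := by
        refine mul_le_mul ?_ hxn (norm_nonneg _) (by positivity)
        rw [← norm_neg]; simpa using hf'.le
    _ = 1 / 2 * ‖y‖ := by
        field_simp

variable {μ : Measure (ℂ × ℂ)}

lemma stmt14_memLp_mul_of_bound (φ : ℂ × ℂ → ℂ) (hm : AEStronglyMeasurable φ μ) {M : ℝ}
    (hb : ∀ᵐ ζ ∂μ, ‖φ ζ‖ ≤ M) (f : Lp ℂ 2 μ) :
    MemLp (fun ζ => φ ζ * f ζ) 2 μ := by
  refine MemLp.of_le_mul (c := M) (Lp.memLp f) (hm.mul (Lp.aestronglyMeasurable f)) ?_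
  filter_upwards [hb] with ζ hζ
  rw [norm_mul]
  exact mul_le_mul_of_nonneg_right hζ (norm_nonneg _)

lemma stmt14_koszul_of_not_support
    (Mz1 Mz2 : Lp ℂ 2 μ →L[ℂ] Lp ℂ 2 μ)
    (hMz1 : ∀ f : Lp ℂ 2 μ, (Mz1 f : ℂ × ℂ → ℂ) =ᵐ[μ] fun ζ => ζ.1 * f ζ)
    (hMz2 : ∀ f : Lp ℂ 2 μ, (Mz2 f : ℂ × ℂ → ℂ) =ᵐ[μ] fun ζ => ζ.2 * f ζ)
    (lam : ℂ × ℂ) (hlam : lam ∉ measSupport μ) :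
    koszulNonsingular
      (Mz1.toLinearMap - lam.1 • LinearMap.id)
      (Mz2.toLinearMap - lam.2 • LinearMap.id) := by
  classical
  set A : Lp ℂ 2 μ →ₗ[ℂ] Lp ℂ 2 μ := Mz1.toLinearMap - lam.1 • LinearMap.id with hAdef
  set B : Lp ℂ 2 μ →ₗ[ℂ] Lp ℂ 2 μ := Mz2.toLinearMap - lam.2 • LinearMap.id with hBdef
  have hA : ∀ h : Lp ℂ 2 μ, ((A h : Lp ℂ 2 μ) : ℂ × ℂ → ℂ) =ᵐ[μ]
      fun ζ => (ζ.1 - lam.1) * h ζ := by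
    intro h
    have e : A h = Mz1 h - lam.1 • h := by
      simp [hAdef, LinearMap.sub_apply, LinearMap.smul_apply]
    rw [e]
    filter_upwards [Lp.coeFn_sub (Mz1 h) (lam.1 • h), Lp.coeFn_smul lam.1 h, hMz1 h]
      with ζ e1 e2 e3
    rw [e1, Pi.sub_apply, e2, Pi.smul_apply, smul_eq_mul, e3]
    ring
  have hB : ∀ h : Lp ℂ 2 μ, ((B h : Lp ℂ 2 μ) : ℂ × ℂ → ℂ) =ᵐ[μ]
      fun ζ => (ζ.2 - lam.2) * h ζ := by
    intro h
    have e : B h = Mz2 h - lam.2 • h := by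
      simp [hBdef, LinearMap.sub_apply, LinearMap.smul_apply]
    rw [e]
    filter_upwards [Lp.coeFn_sub (Mz2 h) (lam.2 • h), Lp.coeFn_smul lam.2 h, hMz2 h]
      with ζ e1 e2 e3
    rw [e1, Pi.sub_apply, e2, Pi.smul_apply, smul_eq_mul, e3]
    ring
  simp only [measSupport, Set.mem_setOf_eq, not_forall] at hlam
  obtain ⟨U, hUopen, hUmem, hU0⟩ := hlam
  rw [not_not] at hU0
  obtain ⟨r, hr, hball⟩ := Metric.isOpen_iff.1 hUopen lam hUmem
  have hball0 : μ (Metric.ball lam r) = 0 := measure_mono_null hball hU0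
  set q : ℂ × ℂ → ℝ := fun ζ => Complex.normSq (ζ.1 - lam.1) + Complex.normSq (ζ.2 - lam.2)
    with hqdef
  have hqae : ∀ᵐ ζ ∂μ, r ^ 2 ≤ q ζ := by
    have hae : ∀ᵐ ζ ∂μ, ζ ∉ Metric.ball lam r := by
      rw [ae_iff]; simp only [not_not, Set.setOf_mem_eq]; exact hball0
    filter_upwards [hae] with ζ hζ
    rw [Metric.mem_ball, not_lt, Prod.dist_eq] at hζ
    show r ^ 2 ≤ Complex.normSq (ζ.1 - lam.1) + Complex.normSq (ζ.2 - lam.2)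
    have e1 : Complex.normSq (ζ.1 - lam.1) = ‖ζ.1 - lam.1‖ ^ 2 :=
      (Complex.sq_norm _).symm
    have e2 : Complex.normSq (ζ.2 - lam.2) = ‖ζ.2 - lam.2‖ ^ 2 :=
      (Complex.sq_norm _).symm
    rw [Complex.dist_eq, Complex.dist_eq] at hζ
    rcases le_max_iff.1 hζ with h | h
    · nlinarith [Complex.normSq_nonneg (ζ.2 - lam.2), norm_nonneg (ζ.1 - lam.1)]
    · nlinarith [Complex.normSq_nonneg (ζ.1 - lam.1), norm_nonneg (ζ.2 - lam.2)]
  set φ₁ : ℂ × ℂ → ℂ := fun ζ => (starRingEnd ℂ) (ζ.1 - lam.1) / ((q ζ : ℝ) : ℂ) with hφ₁def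
  set φ₂ : ℂ × ℂ → ℂ := fun ζ => (starRingEnd ℂ) (ζ.2 - lam.2) / ((q ζ : ℝ) : ℂ) with hφ₂def
  have hqm : Measurable q := by
    apply Measurable.add
    · exact Complex.continuous_normSq.measurable.comp
        ((measurable_fst.sub measurable_const))
    · exact Complex.continuous_normSq.measurable.comp
        ((measurable_snd.sub measurable_const))
  have hφ₁m : AEStronglyMeasurable φ₁ μ := by
    refine Measurable.aestronglyMeasurable ?_
    exact (Complex.continuous_conj.measurable.comp
      (measurable_fst.sub measurable_const)).div (Complex.measurable_ofReal.comp hqm)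
  have hφ₂m : AEStronglyMeasurable φ₂ μ := by
    refine Measurable.aestronglyMeasurable ?_
    exact (Complex.continuous_conj.measurable.comp
      (measurable_snd.sub measurable_const)).div (Complex.measurable_ofReal.comp hqm)
  have hbd : ∀ᵐ ζ ∂μ, ‖φ₁ ζ‖ ≤ 1 / r ∧ ‖φ₂ ζ‖ ≤ 1 / r := by
    filter_upwards [hqae] with ζ hq
    have hqpos : 0 < q ζ := lt_of_lt_of_le (by positivity) hq
    have habs1 : ‖ζ.1 - lam.1‖ ^ 2 ≤ q ζ := by
      have := Complex.normSq_nonneg (ζ.2 - lam.2)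
      rw [Complex.sq_norm]
      show Complex.normSq _ ≤ Complex.normSq (ζ.1 - lam.1) + Complex.normSq (ζ.2 - lam.2)
      linarith
    have habs2 : ‖ζ.2 - lam.2‖ ^ 2 ≤ q ζ := by
      have := Complex.normSq_nonneg (ζ.1 - lam.1)
      rw [Complex.sq_norm]
      show Complex.normSq _ ≤ Complex.normSq (ζ.1 - lam.1) + Complex.normSq (ζ.2 - lam.2)
      linarith
    constructor
    · have e : ‖φ₁ ζ‖ = ‖ζ.1 - lam.1‖ / q ζ := by
        rw [hφ₁def]
        simp only [norm_div, Complex.norm_conj, Complex.norm_real, Real.norm_eq_abs,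
          abs_of_pos hqpos]
      rw [e, div_le_div_iff₀ hqpos hr]
      nlinarith [sq_nonneg (‖ζ.1 - lam.1‖ - r), norm_nonneg (ζ.1 - lam.1)]
    · have e : ‖φ₂ ζ‖ = ‖ζ.2 - lam.2‖ / q ζ := by
        rw [hφ₂def]
        simp only [norm_div, Complex.norm_conj, Complex.norm_real, Real.norm_eq_abs,
          abs_of_pos hqpos]
      rw [e, div_le_div_iff₀ hqpos hr]
      nlinarith [sq_nonneg (‖ζ.2 - lam.2‖ - r), norm_nonneg (ζ.2 - lam.2)]
  have hbd1 : ∀ᵐ ζ ∂μ, ‖φ₁ ζ‖ ≤ 1 / r := by filter_upwards [hbd] with ζ h; exact h.1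
  have hbd2 : ∀ᵐ ζ ∂μ, ‖φ₂ ζ‖ ≤ 1 / r := by filter_upwards [hbd] with ζ h; exact h.2
  have hone : ∀ᵐ ζ ∂μ, φ₁ ζ * (ζ.1 - lam.1) + φ₂ ζ * (ζ.2 - lam.2) = 1 := by
    filter_upwards [hqae] with ζ hq
    have hqpos : 0 < q ζ := lt_of_lt_of_le (by positivity) hq
    have hqne : ((q ζ : ℝ) : ℂ) ≠ 0 := by
      simpa using hqpos.ne'
    rw [hφ₁def, hφ₂def]
    have e1 : ((starRingEnd ℂ) ζ.1 - (starRingEnd ℂ) lam.1) * (ζ.1 - lam.1) =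
        ((Complex.normSq (ζ.1 - lam.1) : ℝ) : ℂ) := by
      rw [← map_sub, mul_comm]; exact Complex.mul_conj _
    have e2 : ((starRingEnd ℂ) ζ.2 - (starRingEnd ℂ) lam.2) * (ζ.2 - lam.2) =
        ((Complex.normSq (ζ.2 - lam.2) : ℝ) : ℂ) := by
      rw [← map_sub, mul_comm]; exact Complex.mul_conj _
    show (starRingEnd ℂ) (ζ.1 - lam.1) / ((q ζ : ℝ) : ℂ) * (ζ.1 - lam.1)
      + (starRingEnd ℂ) (ζ.2 - lam.2) / ((q ζ : ℝ) : ℂ) * (ζ.2 - lam.2) = 1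
    rw [div_mul_eq_mul_div, div_mul_eq_mul_div, ← add_div, div_eq_one_iff_eq hqne,
      map_sub, map_sub, e1, e2]
    simp only [hqdef]
    push_cast
    ring
  refine ⟨?_, ?_, ?_⟩
  · intro h hA0 hB0
    have ha : (fun ζ => (ζ.1 - lam.1) * (h : ℂ × ℂ → ℂ) ζ) =ᵐ[μ] 0 := by
      have h0 : ((A h : Lp ℂ 2 μ) : ℂ × ℂ → ℂ) =ᵐ[μ] 0 := by
        rw [hA0]; exact Lp.coeFn_zero ℂ 2 μ
      exact (hA h).symm.trans h0
    have hb : (fun ζ => (ζ.2 - lam.2) * (h : ℂ × ℂ → ℂ) ζ) =ᵐ[μ] 0 := by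
      have h0 : ((B h : Lp ℂ 2 μ) : ℂ × ℂ → ℂ) =ᵐ[μ] 0 := by
        rw [hB0]; exact Lp.coeFn_zero ℂ 2 μ
      exact (hB h).symm.trans h0
    refine Lp.ext ?_
    have hz : ((0 : Lp ℂ 2 μ) : ℂ × ℂ → ℂ) =ᵐ[μ] (0 : ℂ × ℂ → ℂ) := Lp.coeFn_zero ℂ 2 μ
    refine Filter.EventuallyEq.trans ?_ hz.symm
    filter_upwards [ha, hb, hone] with ζ haζ hbζ honeζ
    simp only [Pi.zero_apply] at haζ hbζ ⊢
    calc (h : ℂ × ℂ → ℂ) ζ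
        = (φ₁ ζ * (ζ.1 - lam.1) + φ₂ ζ * (ζ.2 - lam.2)) * (h : ℂ × ℂ → ℂ) ζ := by
          rw [honeζ, one_mul]
      _ = φ₁ ζ * ((ζ.1 - lam.1) * (h : ℂ × ℂ → ℂ) ζ)
          + φ₂ ζ * ((ζ.2 - lam.2) * (h : ℂ × ℂ → ℂ) ζ) := by ring
      _ = 0 := by rw [haζ, hbζ]; ring
  · intro h₁ h₂ hcomm
    have hc : (fun ζ => (ζ.1 - lam.1) * (h₂ : ℂ × ℂ → ℂ) ζ) =ᵐ[μ]
        fun ζ => (ζ.2 - lam.2) * (h₁ : ℂ × ℂ → ℂ) ζ := by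
      have e : ((A h₂ : Lp ℂ 2 μ) : ℂ × ℂ → ℂ) =ᵐ[μ]
          fun ζ => (ζ.2 - lam.2) * (h₁ : ℂ × ℂ → ℂ) ζ := by
        rw [hcomm]; exact hB h₁
      exact (hA h₂).symm.trans e
    have mem : MemLp (fun ζ => φ₁ ζ * (h₁ : ℂ × ℂ → ℂ) ζ + φ₂ ζ * (h₂ : ℂ × ℂ → ℂ) ζ) 2 μ :=
      (stmt14_memLp_mul_of_bound φ₁ hφ₁m hbd1 h₁).add
        (stmt14_memLp_mul_of_bound φ₂ hφ₂m hbd2 h₂)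
    refine ⟨mem.toLp _, ?_, ?_⟩
    · refine Lp.ext ?_
      refine (hA _).trans ?_
      filter_upwards [mem.coeFn_toLp, hc, hone] with ζ hcoe hcζ honeζ
      rw [hcoe]
      calc (ζ.1 - lam.1) * (φ₁ ζ * (h₁ : ℂ × ℂ → ℂ) ζ + φ₂ ζ * (h₂ : ℂ × ℂ → ℂ) ζ)
          = φ₁ ζ * ((ζ.1 - lam.1) * (h₁ : ℂ × ℂ → ℂ) ζ)
            + φ₂ ζ * ((ζ.1 - lam.1) * (h₂ : ℂ × ℂ → ℂ) ζ) := by ring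
        _ = φ₁ ζ * ((ζ.1 - lam.1) * (h₁ : ℂ × ℂ → ℂ) ζ)
            + φ₂ ζ * ((ζ.2 - lam.2) * (h₁ : ℂ × ℂ → ℂ) ζ) := by rw [hcζ]
        _ = (φ₁ ζ * (ζ.1 - lam.1) + φ₂ ζ * (ζ.2 - lam.2)) * (h₁ : ℂ × ℂ → ℂ) ζ := by ring
        _ = (h₁ : ℂ × ℂ → ℂ) ζ := by rw [honeζ, one_mul]
    · refine Lp.ext ?_
      refine (hB _).trans ?_
      filter_upwards [mem.coeFn_toLp, hc, hone] with ζ hcoe hcζ honeζ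
      rw [hcoe]
      calc (ζ.2 - lam.2) * (φ₁ ζ * (h₁ : ℂ × ℂ → ℂ) ζ + φ₂ ζ * (h₂ : ℂ × ℂ → ℂ) ζ)
          = φ₁ ζ * ((ζ.2 - lam.2) * (h₁ : ℂ × ℂ → ℂ) ζ)
            + φ₂ ζ * ((ζ.2 - lam.2) * (h₂ : ℂ × ℂ → ℂ) ζ) := by ring
        _ = φ₁ ζ * ((ζ.1 - lam.1) * (h₂ : ℂ × ℂ → ℂ) ζ)
            + φ₂ ζ * ((ζ.2 - lam.2) * (h₂ : ℂ × ℂ → ℂ) ζ) := by rw [hcζ]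
        _ = (φ₁ ζ * (ζ.1 - lam.1) + φ₂ ζ * (ζ.2 - lam.2)) * (h₂ : ℂ × ℂ → ℂ) ζ := by ring
        _ = (h₂ : ℂ × ℂ → ℂ) ζ := by rw [honeζ, one_mul]
  · intro h
    have mem2 : MemLp (fun ζ => φ₁ ζ * (h : ℂ × ℂ → ℂ) ζ) 2 μ :=
      stmt14_memLp_mul_of_bound φ₁ hφ₁m hbd1 h
    have mem1 : MemLp (fun ζ => -(φ₂ ζ * (h : ℂ × ℂ → ℂ) ζ)) 2 μ :=
      (stmt14_memLp_mul_of_bound φ₂ hφ₂m hbd2 h).neg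
    refine ⟨mem1.toLp _, mem2.toLp _, ?_⟩
    refine (Lp.ext ?_).symm
    have e : ((A (mem2.toLp _) - B (mem1.toLp _) : Lp ℂ 2 μ) : ℂ × ℂ → ℂ) =ᵐ[μ]
        fun ζ => ((A (mem2.toLp _) : Lp ℂ 2 μ) : ℂ × ℂ → ℂ) ζ
          - ((B (mem1.toLp _) : Lp ℂ 2 μ) : ℂ × ℂ → ℂ) ζ := by
      filter_upwards [Lp.coeFn_sub (A (mem2.toLp _)) (B (mem1.toLp _))] with ζ hζ
      rw [hζ, Pi.sub_apply]
    refine e.trans ?_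
    filter_upwards [hA (mem2.toLp _), hB (mem1.toLp _), mem2.coeFn_toLp, mem1.coeFn_toLp, hone]
      with ζ hAζ hBζ hc2 hc1 honeζ
    rw [hAζ, hBζ, hc2, hc1]
    calc (ζ.1 - lam.1) * (φ₁ ζ * (h : ℂ × ℂ → ℂ) ζ)
          - (ζ.2 - lam.2) * -(φ₂ ζ * (h : ℂ × ℂ → ℂ) ζ)
        = (φ₁ ζ * (ζ.1 - lam.1) + φ₂ ζ * (ζ.2 - lam.2)) * (h : ℂ × ℂ → ℂ) ζ := by ring
      _ = (h : ℂ × ℂ → ℂ) ζ := by rw [honeζ, one_mul]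

lemma stmt14_exp_dist_le {θ τ : ℝ} (h : |θ - τ| ≤ 1) :
    dist (Complex.exp (θ * Complex.I)) (Complex.exp (τ * Complex.I)) ≤ 2 * |θ - τ| := by
  rw [Complex.dist_eq]
  have e : Complex.exp (θ * Complex.I) - Complex.exp (τ * Complex.I)
      = Complex.exp (τ * Complex.I) * (Complex.exp (((θ - τ : ℝ) : ℂ) * Complex.I) - 1) := by
    rw [mul_sub, mul_one, ← Complex.exp_add]
    congr 2
    push_cast
    ring
  rw [e, norm_mul]
  have h1 : ‖Complex.exp (τ * Complex.I)‖ = 1 := by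
    rw [Complex.norm_exp]
    simp
  have h2 : ‖((θ - τ : ℝ) : ℂ) * Complex.I‖ = |θ - τ| := by
    rw [norm_mul, Complex.norm_I, Complex.norm_real, Real.norm_eq_abs, mul_one]
  rw [h1, one_mul]
  calc ‖Complex.exp (((θ - τ : ℝ) : ℂ) * Complex.I) - 1‖
      ≤ 2 * ‖((θ - τ : ℝ) : ℂ) * Complex.I‖ :=
        Complex.norm_exp_sub_one_le (by rw [h2]; exact h)
    _ = 2 * |θ - τ| := by rw [h2]

lemma stmt14_Vbox_subset_closedBall (τ₁ τ₂ ε : ℝ) (hε1 : ε ≤ 1) :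
    Vbox τ₁ τ₂ ε ⊆
      Metric.closedBall (Complex.exp (τ₁ * Complex.I), Complex.exp (τ₂ * Complex.I)) ε := by
  rintro ζ ⟨θ₁, θ₂, h1, h2, rfl⟩
  rw [Metric.mem_closedBall, Prod.dist_eq]
  refine max_le ?_ ?_
  · refine le_trans (stmt14_exp_dist_le (by linarith [abs_nonneg (θ₁ - τ₁)])) (by linarith)
  · refine le_trans (stmt14_exp_dist_le (by linarith [abs_nonneg (θ₂ - τ₂)])) (by linarith)

lemma stmt14_no_solution_at_S_point
    (μ : Measure (ℂ × ℂ)) [IsFiniteMeasure μ]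
    (hnoatom : ∀ x : ℂ × ℂ, μ {x} = 0)
    (τ₁ τ₂ : ℝ) {c : ℝ} (hc : 0 < c) {ε₀ : ℝ} (hε₀ : 0 < ε₀)
    (hbox : ∀ ε : ℝ, 0 < ε → ε < ε₀ → ENNReal.ofReal (c * ε ^ 2) ≤ μ (Vbox τ₁ τ₂ ε))
    (h₁ h₂ : Lp ℂ 2 μ)
    (hsol : ∀ᵐ ζ ∂μ, (ζ.1 - Complex.exp (τ₁ * Complex.I)) * h₂ ζ
        - (ζ.2 - Complex.exp (τ₂ * Complex.I)) * h₁ ζ = 1) : False := by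
  classical
  set lam' : ℂ × ℂ := (Complex.exp (τ₁ * Complex.I), Complex.exp (τ₂ * Complex.I)) with hlam'
  set F : ℂ × ℂ → ℝ := fun ζ => (‖(h₁ : ℂ × ℂ → ℂ) ζ‖ + ‖(h₂ : ℂ × ℂ → ℂ) ζ‖) ^ 2 with hFdef
  have hFmem : MemLp (fun ζ => ‖(h₁ : ℂ × ℂ → ℂ) ζ‖ + ‖(h₂ : ℂ × ℂ → ℂ) ζ‖) 2 μ :=
    (Lp.memLp h₁).norm.add (Lp.memLp h₂).norm
  have hFint : Integrable F μ := hFmem.integrable_sq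
  have hFnn : ∀ ζ, 0 ≤ F ζ := fun ζ => sq_nonneg _
  have key : ∀ ε : ℝ, 0 < ε → ε < ε₀ → ε < 1 →
      c ≤ ∫ ζ in Metric.closedBall lam' ε, F ζ ∂μ := by
    intro ε hε hεε₀ hε1
    set B := Metric.closedBall lam' ε with hBdef
    have h1' : c * ε ^ 2 ≤ (μ B).toReal := by
      have hle : ENNReal.ofReal (c * ε ^ 2) ≤ μ B :=
        le_trans (hbox ε hε hεε₀)
          (measure_mono (stmt14_Vbox_subset_closedBall τ₁ τ₂ ε hε1.le))
      calc c * ε ^ 2 = (ENNReal.ofReal (c * ε ^ 2)).toReal :=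
            (ENNReal.toReal_ofReal (by positivity)).symm
        _ ≤ (μ B).toReal := ENNReal.toReal_mono (measure_ne_top μ _) hle
    have h2' : (μ B).toReal = ∫ _ζ in B, (1 : ℝ) ∂μ := by
      rw [setIntegral_const]; simp [Measure.real]
    have h3' : ∫ _ζ in B, (1 : ℝ) ∂μ ≤ ∫ ζ in B, ε ^ 2 * F ζ ∂μ := by
      refine setIntegral_mono_ae_restrict ?_ ?_ ?_
      · exact integrableOn_const (measure_ne_top μ _)
      · exact (hFint.const_mul _).integrableOn
      · have hsol' := ae_restrict_of_ae (μ := μ) (s := B) hsol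
        have hmem : ∀ᵐ ζ ∂(μ.restrict B), ζ ∈ B :=
          ae_restrict_mem Metric.isClosed_closedBall.measurableSet
        filter_upwards [hsol', hmem] with ζ hζ hζB
        have hζd : dist ζ lam' ≤ ε := Metric.mem_closedBall.mp hζB
        rw [Prod.dist_eq] at hζd
        have hd1 : ‖ζ.1 - lam'.1‖ ≤ ε := by
          rw [← dist_eq_norm]
          exact le_trans (le_max_left _ _) hζd
        have hd2 : ‖ζ.2 - lam'.2‖ ≤ ε := by
          rw [← dist_eq_norm]
          exact le_trans (le_max_right _ _) hζd
        have habs : (1 : ℝ) ≤ ε * (‖(h₁ : ℂ × ℂ → ℂ) ζ‖ + ‖(h₂ : ℂ × ℂ → ℂ) ζ‖) := by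
          have e1 : (1 : ℝ) = ‖(ζ.1 - lam'.1) * (h₂ : ℂ × ℂ → ℂ) ζ
              - (ζ.2 - lam'.2) * (h₁ : ℂ × ℂ → ℂ) ζ‖ := by
            rw [hζ]; simp
          rw [e1]
          calc ‖(ζ.1 - lam'.1) * (h₂ : ℂ × ℂ → ℂ) ζ
              - (ζ.2 - lam'.2) * (h₁ : ℂ × ℂ → ℂ) ζ‖
              ≤ ‖(ζ.1 - lam'.1) * (h₂ : ℂ × ℂ → ℂ) ζ‖
                + ‖(ζ.2 - lam'.2) * (h₁ : ℂ × ℂ → ℂ) ζ‖ := norm_sub_le _ _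
            _ = ‖ζ.1 - lam'.1‖ * ‖(h₂ : ℂ × ℂ → ℂ) ζ‖
                + ‖ζ.2 - lam'.2‖ * ‖(h₁ : ℂ × ℂ → ℂ) ζ‖ := by rw [norm_mul, norm_mul]
            _ ≤ ε * ‖(h₂ : ℂ × ℂ → ℂ) ζ‖ + ε * ‖(h₁ : ℂ × ℂ → ℂ) ζ‖ := by
                gcongr
            _ = ε * (‖(h₁ : ℂ × ℂ → ℂ) ζ‖ + ‖(h₂ : ℂ × ℂ → ℂ) ζ‖) := by ring
        show (1 : ℝ) ≤ ε ^ 2 * (‖(h₁ : ℂ × ℂ → ℂ) ζ‖ + ‖(h₂ : ℂ × ℂ → ℂ) ζ‖) ^ 2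
        nlinarith [habs,
          mul_self_nonneg (ε * (‖(h₁ : ℂ × ℂ → ℂ) ζ‖ + ‖(h₂ : ℂ × ℂ → ℂ) ζ‖) - 1)]
    have h4' : ∫ ζ in B, ε ^ 2 * F ζ ∂μ = ε ^ 2 * ∫ ζ in B, F ζ ∂μ := by
      simpa [smul_eq_mul] using integral_smul (μ := μ.restrict B) (ε ^ 2) F
    have : c * ε ^ 2 ≤ ε ^ 2 * ∫ ζ in B, F ζ ∂μ := by
      rw [← h4']; linarith
    have hε2 : (0:ℝ) < ε ^ 2 := by positivity
    nlinarith [this]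
  set ε₁ : ℝ := min ε₀ 1 with hε₁def
  have hε₁ : 0 < ε₁ := lt_min hε₀ one_pos
  have hε₁le₀ : ε₁ ≤ ε₀ := min_le_left _ _
  have hε₁le1 : ε₁ ≤ 1 := min_le_right _ _
  set rn : ℕ → ℝ := fun n => ε₁ / (n + 2) with hrndef
  have hrnpos : ∀ n, 0 < rn n := fun n => by positivity
  have hrnlt : ∀ n, rn n < ε₁ := fun n => by
    rw [hrndef]
    rw [div_lt_iff₀ (by positivity)]
    nlinarith [hε₁, (Nat.cast_nonneg n : (0:ℝ) ≤ n)]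
  have hcn : ∀ n, c ≤ ∫ ζ in Metric.closedBall lam' (rn n), F ζ ∂μ := fun n =>
    key _ (hrnpos n) (lt_of_lt_of_le (hrnlt n) hε₁le₀) (lt_of_lt_of_le (hrnlt n) hε₁le1)
  have htend : Filter.Tendsto (fun n => ∫ ζ in Metric.closedBall lam' (rn n), F ζ ∂μ)
      Filter.atTop (nhds 0) := by
    have heq : ∀ n, ∫ ζ in Metric.closedBall lam' (rn n), F ζ ∂μ
        = ∫ ζ, (Metric.closedBall lam' (rn n)).indicator F ζ ∂μ := fun n =>
      (integral_indicator Metric.isClosed_closedBall.measurableSet).symm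
    have hlim0 : ∫ ζ, ({lam'} : Set (ℂ × ℂ)).indicator F ζ ∂μ = 0 := by
      rw [integral_indicator (measurableSet_singleton _),
        Measure.restrict_eq_zero.mpr (hnoatom lam')]
      exact integral_zero_measure _
    have hDCT : Filter.Tendsto
        (fun n => ∫ ζ, (Metric.closedBall lam' (rn n)).indicator F ζ ∂μ)
        Filter.atTop (nhds (∫ ζ, ({lam'} : Set (ℂ × ℂ)).indicator F ζ ∂μ)) := by
      refine tendsto_integral_of_dominated_convergence F
        (fun n => hFint.aestronglyMeasurable.indicator Metric.isClosed_closedBall.measurableSet)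
        hFint ?_ ?_
      · intro n
        refine Filter.Eventually.of_forall fun a => ?_
        by_cases ha : a ∈ Metric.closedBall lam' (rn n)
        · rw [Set.indicator_of_mem ha, Real.norm_eq_abs, abs_of_nonneg (hFnn a)]
        · rw [Set.indicator_of_notMem ha]
          simpa using hFnn a
      · refine Filter.Eventually.of_forall fun a => ?_
        by_cases ha : a = lam'
        · rw [ha]
          have h1 : ∀ n, (Metric.closedBall lam' (rn n)).indicator F lam' = F lam' := fun n =>
            Set.indicator_of_mem (Metric.mem_closedBall_self (hrnpos n).le) F
          have h2 : ({lam'} : Set (ℂ × ℂ)).indicator F lam' = F lam' :=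
            Set.indicator_of_mem rfl F
          simp only [h1, h2]
          exact tendsto_const_nhds
        · have hd : 0 < dist a lam' := dist_pos.mpr ha
          have hns : a ∉ ({lam'} : Set (ℂ × ℂ)) := by simp [ha]
          have h2 : ({lam'} : Set (ℂ × ℂ)).indicator F a = 0 :=
            Set.indicator_of_notMem hns F
          rw [h2]
          obtain ⟨N, hN⟩ := exists_nat_gt (ε₁ / dist a lam')
          have hev : ∀ᶠ n in Filter.atTop,
              (Metric.closedBall lam' (rn n)).indicator F a = 0 := by
            refine Filter.eventually_atTop.2 ⟨N, fun n hn => ?_⟩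
            refine Set.indicator_of_notMem ?_ F
            rw [Metric.mem_closedBall, not_le]
            have : rn n ≤ rn N := by
              rw [hrndef]
              apply div_le_div_of_nonneg_left hε₁.le (by positivity)
              exact_mod_cast by omega
            refine lt_of_le_of_lt this ?_
            rw [hrndef, div_lt_iff₀ (by positivity)]
            have hN' : ε₁ / dist a lam' < N := hN
            rw [div_lt_iff₀ hd] at hN'
            nlinarith [hd]
          refine Filter.Tendsto.congr' ?_ tendsto_const_nhds
          filter_upwards [hev] with n hn
          exact hn.symm
    rw [hlim0] at hDCT
    simpa only [← heq] using hDCT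
  have hev : ∀ᶠ n in Filter.atTop,
      (∫ ζ in Metric.closedBall lam' (rn n), F ζ ∂μ) < c :=
    htend.eventually (gt_mem_nhds hc)
  obtain ⟨n, hn⟩ := hev.exists
  exact absurd (hcn n) (not_le.mpr hn)

end Auxiliary

/-- let `μ` be a finite positive Borel measure on `𝕋²` with no
point masses such that (a) `μ({λ}×𝕋) = 0 = μ(𝕋×{λ})` for all `λ`, and
(b) there is a dense subset `S` of `supp μ` on which the box-measure lower
bound `μ(V_ε) ≥ cε²` holds for small `ε`.  Then the Taylor joint spectrum of
`(M_{z₁}, M_{z₂})` on `L²(μ)` equals `supp μ`. -/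
theorem stmt14
    (μ : Measure (ℂ × ℂ)) [IsFiniteMeasure μ]
    (hμtorus : μ {ζ : ℂ × ℂ | ¬ (‖ζ.1‖ = 1 ∧ ‖ζ.2‖ = 1)} = 0)
    (hnoatom : ∀ x : ℂ × ℂ, μ {x} = 0)
    (hlines : ∀ lam : ℂ, μ ({lam} ×ˢ (Set.univ : Set ℂ)) = 0 ∧
      μ ((Set.univ : Set ℂ) ×ˢ {lam}) = 0)
    (hdense : ∃ S : Set (ℂ × ℂ), S ⊆ measSupport μ ∧
      measSupport μ ⊆ closure S ∧
      ∀ lam ∈ S, ∃ τ₁ τ₂ : ℝ,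
        lam = (Complex.exp (τ₁ * Complex.I), Complex.exp (τ₂ * Complex.I)) ∧
        ∃ c > (0:ℝ), ∃ ε₀ > (0:ℝ), ∀ ε : ℝ, 0 < ε → ε < ε₀ →
          ENNReal.ofReal (c * ε ^ 2) ≤ μ (Vbox τ₁ τ₂ ε))
    (Mz1 Mz2 : Lp ℂ 2 μ →L[ℂ] Lp ℂ 2 μ)
    (hMz1 : ∀ f : Lp ℂ 2 μ, (Mz1 f : ℂ × ℂ → ℂ) =ᵐ[μ] fun ζ => ζ.1 * f ζ)
    (hMz2 : ∀ f : Lp ℂ 2 μ, (Mz2 f : ℂ × ℂ → ℂ) =ᵐ[μ] fun ζ => ζ.2 * f ζ) :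
    taylorSpectrum Mz1 Mz2 = measSupport μ := by
  classical
  set H := Lp ℂ 2 μ with hH
  -- the last-stage Koszul map as a continuous linear map
  set Φ : ℂ × ℂ → (H × H →L[ℂ] H) := fun l =>
    (Mz1.comp (ContinuousLinearMap.snd ℂ H H) - l.1 • ContinuousLinearMap.snd ℂ H H)
    - (Mz2.comp (ContinuousLinearMap.fst ℂ H H) - l.2 • ContinuousLinearMap.fst ℂ H H)
    with hΦdef
  have hΦapp : ∀ (l : ℂ × ℂ) (p : H × H),
      Φ l p = (Mz1 p.2 - l.1 • p.2) - (Mz2 p.1 - l.2 • p.1) := by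
    intro l p
    simp [hΦdef, ContinuousLinearMap.sub_apply, ContinuousLinearMap.smul_apply,
      ContinuousLinearMap.comp_apply]
  have hΦnorm : ∀ l l' : ℂ × ℂ, ‖Φ l' - Φ l‖ ≤ 2 * dist l l' := by
    intro l l'
    refine ContinuousLinearMap.opNorm_le_bound _
      (mul_nonneg (by norm_num) dist_nonneg) fun p => ?_
    have e : (Φ l' - Φ l) p = (l.1 - l'.1) • p.2 + (l'.2 - l.2) • p.1 := by
      rw [ContinuousLinearMap.sub_apply, hΦapp, hΦapp]
      module
    rw [e]
    have hb1 : ‖l.1 - l'.1‖ ≤ dist l l' := by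
      rw [← dist_eq_norm]
      exact le_trans (le_max_left _ _) (le_of_eq (Prod.dist_eq).symm)
    have hb2 : ‖l'.2 - l.2‖ ≤ dist l l' := by
      rw [← dist_eq_norm, dist_comm]
      exact le_trans (le_max_right _ _) (le_of_eq (Prod.dist_eq).symm)
    calc ‖(l.1 - l'.1) • p.2 + (l'.2 - l.2) • p.1‖
        ≤ ‖(l.1 - l'.1) • p.2‖ + ‖(l'.2 - l.2) • p.1‖ := norm_add_le _ _
      _ = ‖l.1 - l'.1‖ * ‖p.2‖ + ‖l'.2 - l.2‖ * ‖p.1‖ := by rw [norm_smul, norm_smul]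
      _ ≤ dist l l' * ‖p‖ + dist l l' * ‖p‖ := by
          gcongr
          · exact norm_snd_le p
          · exact norm_fst_le p
      _ = 2 * dist l l' * ‖p‖ := by ring
  refine Set.ext fun lam => ?_
  simp only [taylorSpectrum, Set.mem_setOf_eq]
  constructor
  · intro hns
    by_contra hmem
    exact hns (stmt14_koszul_of_not_support Mz1 Mz2 hMz1 hMz2 lam hmem)
  · intro hmem hk
    obtain ⟨S, hSsub, hSdense, hS⟩ := hdense
    have hsurj : Function.Surjective (Φ lam) := by
      intro h
      obtain ⟨h₁, h₂, hh⟩ := hk.2.2 h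
      refine ⟨(h₁, h₂), ?_⟩
      rw [hΦapp, hh]
      simp [LinearMap.sub_apply, LinearMap.smul_apply, LinearMap.id_apply]
    obtain ⟨δ, hδ, hpert⟩ := stmt14_surj_perturb (Φ lam) hsurj
    obtain ⟨lam', hlam'S, hdist⟩ :=
      Metric.mem_closure_iff.1 (hSdense hmem) (δ / 2) (by positivity)
    have hsurj' : Function.Surjective (Φ lam') := by
      apply hpert
      calc ‖Φ lam' - Φ lam‖ ≤ 2 * dist lam lam' := hΦnorm lam lam'
        _ < δ := by linarith
    obtain ⟨τ₁, τ₂, hlam'eq, c, hc, ε₀, hε₀, hbox⟩ := hS lam' hlam'S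
    have honemem : MemLp (fun _ : ℂ × ℂ => (1:ℂ)) 2 μ := memLp_const 1
    obtain ⟨p, hp⟩ := hsurj' (honemem.toLp _)
    have e0 : ((Φ lam' p : H) : ℂ × ℂ → ℂ) =ᵐ[μ]
        fun ζ => (ζ.1 - lam'.1) * p.2 ζ - (ζ.2 - lam'.2) * p.1 ζ := by
      rw [hΦapp]
      filter_upwards [Lp.coeFn_sub (Mz1 p.2 - lam'.1 • p.2) (Mz2 p.1 - lam'.2 • p.1),
        Lp.coeFn_sub (Mz1 p.2) (lam'.1 • p.2), Lp.coeFn_sub (Mz2 p.1) (lam'.2 • p.1),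
        Lp.coeFn_smul lam'.1 p.2, Lp.coeFn_smul lam'.2 p.1, hMz1 p.2, hMz2 p.1]
        with ζ a1 a2 a3 a4 a5 a6 a7
      rw [a1, Pi.sub_apply, a2, Pi.sub_apply, a3, Pi.sub_apply, a4, Pi.smul_apply,
        smul_eq_mul, a5, Pi.smul_apply, smul_eq_mul, a6, a7]
      ring
    have e1 : ((Φ lam' p : H) : ℂ × ℂ → ℂ) =ᵐ[μ] fun _ => (1:ℂ) := by
      rw [hp]; exact honemem.coeFn_toLp
    have hae : ∀ᵐ ζ ∂μ, (ζ.1 - lam'.1) * p.2 ζ - (ζ.2 - lam'.2) * p.1 ζ = 1 := by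
      filter_upwards [e0.symm.trans e1] with ζ hζ
      exact hζ
    have hl1 : lam'.1 = Complex.exp (τ₁ * Complex.I) := by rw [hlam'eq]
    have hl2 : lam'.2 = Complex.exp (τ₂ * Complex.I) := by rw [hlam'eq]
    rw [hl1, hl2] at hae
    exact stmt14_no_solution_at_S_point μ hnoatom τ₁ τ₂ hc hε₀ hbox p.1 p.2 hae
end
end
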